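/- arXiv:2009.14659 — 4 statements merged into one kernel-verified Lean document; each statement's English description precedes it below -/
import Mathlib

section
/- Let Ω ⊂ ℝⁿ be a bounded open set, s ∈ (0,1), σ ∈ (0,s). There exists a constant 𝔠 = 𝔠(n,s,σ,Ω) > 0, independent of p, such that for every p ∈ [1,∞) and every u ∈ W^{s,p}(Ω): ‖u‖_{W^{σ,1}(Ω)} ≤ 𝔠 ‖u‖_{W^{s,p}(Ω)}, where ‖u‖_{W^{s,q}(Ω)} = ‖u‖_{L^q(Ω)} + [u]_{W^{s,q}(Ω)}. In particular the embedding constant can be chosen uniformly in p. -/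
open MeasureTheory ENNReal Filter

/-- A set `Ω ⊆ ℝⁿ` has Lipschitz boundary: near each boundary point, `Ω` is the
(rotated) hypograph of a Lipschitz function. -/
def HasLipschitzBoundary {n : ℕ} (Ω : Set (EuclideanSpace ℝ (Fin n))) : Prop :=
  ∀ x ∈ frontier Ω, ∃ (e : EuclideanSpace ℝ (Fin n)) (K : NNReal)
    (f : EuclideanSpace ℝ (Fin n) → ℝ) (r : ℝ), ‖e‖ = 1 ∧ 0 < r ∧ LipschitzWith K f ∧
      ∀ y ∈ Metric.ball x r, (y ∈ Ω ↔ (inner ℝ y e : ℝ) < f (y - (inner ℝ y e : ℝ) • e))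

/-- The (q-th power of the) Gagliardo double integral
`∫_Ω ∫_Ω |u(x)-u(y)|^q / |x-y|^{n+sq} dx dy`. -/
noncomputable def gagliardoIntegral {n : ℕ} (Ω : Set (EuclideanSpace ℝ (Fin n)))
    (s q : ℝ) (u : EuclideanSpace ℝ (Fin n) → ℝ) : ℝ≥0∞ :=
  ∫⁻ x in Ω, ∫⁻ y in Ω,
      ENNReal.ofReal (|u x - u y| ^ q / dist x y ^ ((n : ℝ) + s * q))

/-- The Gagliardo seminorm `[u]_{W^{s,q}(Ω)}`. -/
noncomputable def gagliardoSeminorm {n : ℕ} (Ω : Set (EuclideanSpace ℝ (Fin n)))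
    (s q : ℝ) (u : EuclideanSpace ℝ (Fin n) → ℝ) : ℝ≥0∞ :=
  (gagliardoIntegral Ω s q u) ^ (1 / q)

/-- The fractional Sobolev norm `‖u‖_{W^{s,q}(Ω)} = ‖u‖_{L^q(Ω)} + [u]_{W^{s,q}(Ω)}`. -/
noncomputable def sobolevNorm {n : ℕ} (Ω : Set (EuclideanSpace ℝ (Fin n)))
    (s q : ℝ) (u : EuclideanSpace ℝ (Fin n) → ℝ) : ℝ≥0∞ :=
  (∫⁻ x in Ω, ENNReal.ofReal (|u x| ^ q)) ^ (1 / q) + gagliardoSeminorm Ω s q u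

/-- `Q(Ω) = ℝ^{2n} ∖ (Ω^c × Ω^c)`: pairs with at least one point in `Ω`. -/
def QΩ {n : ℕ} (Ω : Set (EuclideanSpace ℝ (Fin n))) :
    Set (EuclideanSpace ℝ (Fin n) × EuclideanSpace ℝ (Fin n)) :=
  {p | p.1 ∈ Ω ∨ p.2 ∈ Ω}

/-- The nonlocal `(s,q)`-energy `E_s^q(u) = (1/(2q)) ∬_{Q(Ω)} |u(x)-u(y)|^q/|x-y|^{n+sq}`. -/
noncomputable def energy {n : ℕ} (Ω : Set (EuclideanSpace ℝ (Fin n)))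
    (s q : ℝ) (u : EuclideanSpace ℝ (Fin n) → ℝ) : ℝ≥0∞ :=
  (ENNReal.ofReal (2 * q))⁻¹ *
    ∫⁻ p in QΩ Ω, ENNReal.ofReal (|u p.1 - u p.2| ^ q / dist p.1 p.2 ^ ((n : ℝ) + s * q))

/-- The nonlocal tail `T_s^p(φ, Ω^c; x) = ∫_{Ω^c} |φ(y)|^p / |x-y|^{n+sp} dy`. -/
noncomputable def tail {n : ℕ} (Ω : Set (EuclideanSpace ℝ (Fin n)))
    (s p : ℝ) (φ : EuclideanSpace ℝ (Fin n) → ℝ) (x : EuclideanSpace ℝ (Fin n)) : ℝ≥0∞ :=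
  ∫⁻ y in Ωᶜ, ENNReal.ofReal (|φ y| ^ p / dist x y ^ ((n : ℝ) + s * p))

/-!
For `1 < p` and `1 / p + 1 / q = 1`, write `|u x - u y| / |x - y| ^ (n + σ)` as the product of
`|u x - u y| / |x - y| ^ (n / p + s)`, whose `L^p(Ω × Ω)` norm is `[u]_{W^{s,p}}`, and
`|x - y| ^ (s - σ - n / q)`, and apply Hölder. The `q`-th power of the second factor is
`|x - y| ^ ((s - σ) q - n)`; since `(s - σ) q ≥ s - σ` and `|x - y| < M` on `Ω`, it is dominated by
`M ^ ((s - σ) q) (|x - y| ^ (s - σ - n) + 1)`, whose integral is finite and independent of `q`, so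
its `q`-th root is a constant times `M ^ (s - σ)`. For `p = 1` it suffices that
`|x - y| ^ (s - σ) ≤ M ^ (s - σ)`. The `L¹` part is Hölder against `1`:
`‖u‖_{L¹} ≤ |Ω| ^ (1 - 1 / p) ‖u‖_{L^p}`. Both constants are made uniform in `p` by
`X ^ r ≤ max 1 X` for `r ∈ [0, 1]`.
-/
open MeasureTheory Metric ENNReal Module

theorem ENNReal.rpow_le_max_one (X : ℝ≥0∞) {r : ℝ} (h0 : 0 ≤ r) (h1 : r ≤ 1) :
    X ^ r ≤ max 1 X := by
  rcases le_total X 1 with h | h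
  · exact (rpow_le_one h h0).trans (le_max_left _ _)
  · calc X ^ r ≤ X ^ (1 : ℝ) := rpow_le_rpow_of_exponent_le h h1
      _ ≤ max 1 X := by rw [rpow_one]; exact le_max_right _ _

theorem lintegral_ofReal_abs_le_max_one_mul {α : Type*} [MeasurableSpace α] {μ : Measure α}
    {f : α → ℝ} (hf : AEStronglyMeasurable f μ) {p : ℝ} (hp : 1 ≤ p) :
    ∫⁻ x, ENNReal.ofReal |f x| ∂μ ≤
      max 1 (μ Set.univ) * (∫⁻ x, ENNReal.ofReal (|f x| ^ p) ∂μ) ^ (1 / p) := by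
  have hHolder := eLpNorm'_le_eLpNorm'_mul_rpow_measure_univ one_pos hp hf
  simp only [eLpNorm'_eq_lintegral_enorm, div_one, ENNReal.rpow_one, Real.enorm_eq_ofReal_abs,
    ENNReal.ofReal_rpow_of_nonneg (abs_nonneg _) (zero_le_one.trans hp)] at hHolder
  rw [mul_comm]
  refine hHolder.trans (mul_le_mul_right (ENNReal.rpow_le_max_one _ ?_ ?_) _)
  · exact sub_nonneg.2 (div_le_one_of_le₀ hp (zero_le_one.trans hp))
  · exact sub_le_self _ (by positivity)

-- The `+ 1` covers `d = 0`, where `0 ^ 0 = 1`.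
theorem Real.rpow_sub_le_rpow_mul_rpow_sub_add_one {d M α β γ : ℝ} (hd : 0 ≤ d) (hdM : d ≤ M)
    (hM : 1 ≤ M) (hβ : 0 ≤ β) (hβα : β ≤ α) :
    d ^ (α - γ) ≤ M ^ α * (d ^ (β - γ) + 1) := by
  have hMα : 1 ≤ M ^ α := Real.one_le_rpow hM (hβ.trans hβα)
  rcases hd.eq_or_lt with rfl | hd
  · nlinarith [Real.zero_rpow_le_one (α - γ), Real.rpow_nonneg (le_refl (0 : ℝ)) (β - γ)]
  calc d ^ (α - γ) = d ^ (α - β) * d ^ (β - γ) := by rw [← Real.rpow_add hd]; ring_nf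
    _ ≤ M ^ α * d ^ (β - γ) := by
        gcongr
        calc d ^ (α - β) ≤ M ^ (α - β) := by gcongr
          _ ≤ M ^ α := Real.rpow_le_rpow_of_exponent_le hM (by linarith)
    _ ≤ M ^ α * (d ^ (β - γ) + 1) := by gcongr; exact le_add_of_nonneg_right zero_le_one

section AddHaar

variable {E : Type*} [NormedAddCommGroup E] [NormedSpace ℝ E] [FiniteDimensional ℝ E]
  [MeasurableSpace E] [BorelSpace E] {μ : Measure E} [μ.IsAddHaarMeasure]

theorem lintegral_ball_norm_rpow_sub_finrank_lt_top {β : ℝ} (hβ : 0 < β) (R : ℝ) :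
    ∫⁻ z in ball 0 R, ENNReal.ofReal (‖z‖ ^ (β - finrank ℝ E)) ∂μ < ∞ := by
  suffices IntegrableOn (fun z : E ↦ ‖z‖ ^ (β - finrank ℝ E)) (ball 0 R) μ from
    this.lintegral_lt_top
  rcases le_or_gt (finrank ℝ E : ℝ) β with h | h
  · exact (((Real.continuous_rpow_const (sub_nonneg.2 h)).comp continuous_norm).continuousOn
      |>.integrableOn_compact (isCompact_closedBall 0 R)).mono_set ball_subset_closedBall
  · have hd : 0 < finrank ℝ E := by exact_mod_cast hβ.trans h
    refine integrableOn_ball_of_norm_le_rpow (C := 1) hd (sub_lt_self _ hβ)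
      (ae_of_all _ fun z ↦ ?_) (continuous_norm.measurable.pow_const _).aestronglyMeasurable
    rw [Real.norm_eq_abs, abs_of_nonneg (by positivity), one_mul, neg_sub]

end AddHaar

section AddRightInvariant

variable {G : Type*} [NormedAddCommGroup G] [MeasurableSpace G] [BorelSpace G] {μ : Measure G}
  [μ.IsAddRightInvariant]

theorem lintegral_lintegral_dist_rpow_le {Ω : Set G} {M α β : ℝ} (γ : ℝ) (hβ : 0 ≤ β) (hβα : β ≤ α)
    (hM : 1 ≤ M) (hΩ : ∀ x ∈ Ω, ∀ y ∈ Ω, dist x y < M) :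
    ∫⁻ x in Ω, ∫⁻ y in Ω, ENNReal.ofReal (dist x y ^ (α - γ)) ∂μ ∂μ ≤
      ((∫⁻ z in ball 0 M, ENNReal.ofReal (‖z‖ ^ (β - γ)) ∂μ) + μ Ω) * μ Ω *
        ENNReal.ofReal (M ^ α) := by
  set g : G → ℝ≥0∞ := fun z ↦ ENNReal.ofReal (‖z‖ ^ (β - γ))
  have hg : Measurable g := by fun_prop
  have htranslate : ∀ x ∈ Ω, ∫⁻ y in Ω, g (y - x) ∂μ ≤ ∫⁻ z in ball 0 M, g z ∂μ := by
    intro x hx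
    calc ∫⁻ y in Ω, g (y - x) ∂μ ≤ ∫⁻ y in Ω, (ball 0 M).indicator g (y - x) ∂μ := by
          refine setLIntegral_mono ((hg.indicator measurableSet_ball).comp
            (measurable_sub_const x)) fun y hy ↦ ?_
          rw [Set.indicator_of_mem (by rw [mem_ball_zero_iff, ← dist_eq_norm]; exact hΩ y hy x hx)]
      _ ≤ ∫⁻ y, (ball 0 M).indicator g (y - x) ∂μ := setLIntegral_le_lintegral _ _
      _ = ∫⁻ z in ball 0 M, g z ∂μ := by
          rw [lintegral_sub_right_eq_self, lintegral_indicator measurableSet_ball]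
  have hinner : ∀ x ∈ Ω, ∫⁻ y in Ω, ENNReal.ofReal (dist x y ^ (α - γ)) ∂μ ≤
      ((∫⁻ z in ball 0 M, g z ∂μ) + μ Ω) * ENNReal.ofReal (M ^ α) := by
    intro x hx
    calc ∫⁻ y in Ω, ENNReal.ofReal (dist x y ^ (α - γ)) ∂μ
        ≤ ∫⁻ y in Ω, ENNReal.ofReal (M ^ α) * (g (y - x) + 1) ∂μ := by
          refine setLIntegral_mono (by fun_prop) fun y hy ↦ ?_
          rw [← ENNReal.ofReal_one, ← ENNReal.ofReal_add (by positivity) zero_le_one,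
            ← ENNReal.ofReal_mul (by positivity), dist_comm, dist_eq_norm]
          exact ENNReal.ofReal_le_ofReal (Real.rpow_sub_le_rpow_mul_rpow_sub_add_one
            (norm_nonneg _) (dist_eq_norm y x ▸ (hΩ y hy x hx).le) hM hβ hβα)
      _ = ENNReal.ofReal (M ^ α) * ((∫⁻ y in Ω, g (y - x) ∂μ) + μ Ω) := by
          rw [lintegral_const_mul' _ _ ofReal_ne_top, lintegral_add_right _ measurable_const,
            setLIntegral_one]
      _ ≤ ((∫⁻ z in ball 0 M, g z ∂μ) + μ Ω) * ENNReal.ofReal (M ^ α) := by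
          rw [mul_comm]; exact mul_le_mul_left (add_le_add_left (htranslate x hx) _) _
  calc ∫⁻ x in Ω, ∫⁻ y in Ω, ENNReal.ofReal (dist x y ^ (α - γ)) ∂μ ∂μ
      ≤ ∫⁻ _ in Ω, ((∫⁻ z in ball 0 M, g z ∂μ) + μ Ω) * ENNReal.ofReal (M ^ α) ∂μ :=
        setLIntegral_mono measurable_const hinner
    _ = _ := by rw [setLIntegral_const]; ring

end AddRightInvariant

section Gagliardo

variable {n : ℕ} {Ω : Set (EuclideanSpace ℝ (Fin n))} {u : EuclideanSpace ℝ (Fin n) → ℝ}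

theorem gagliardoIntegral_eq_lintegral_prod (hu : Measurable u) (s q : ℝ) :
    gagliardoIntegral Ω s q u =
      ∫⁻ z, ENNReal.ofReal (|u z.1 - u z.2| ^ q / dist z.1 z.2 ^ ((n : ℝ) + s * q))
        ∂(volume.restrict Ω).prod (volume.restrict Ω) :=
  lintegral_lintegral (by fun_prop)

theorem gagliardoIntegral_one_le_mul_of_dist_le {M σ s : ℝ} (hσs : σ ≤ s) (hu : Measurable u)
    (hΩ : ∀ x ∈ Ω, ∀ y ∈ Ω, dist x y ≤ M) :
    gagliardoIntegral Ω σ 1 u ≤ ENNReal.ofReal (M ^ (s - σ)) * gagliardoIntegral Ω s 1 u := by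
  rw [gagliardoIntegral_eq_lintegral_prod hu, gagliardoIntegral_eq_lintegral_prod hu,
    Measure.prod_restrict, ← lintegral_const_mul' _ _ ofReal_ne_top]
  refine setLIntegral_mono (by fun_prop) fun z hz ↦ ?_
  obtain ⟨hz₁, hz₂⟩ := Set.mem_prod.1 hz
  have hM : 0 ≤ M := dist_nonneg.trans (hΩ _ hz₁ _ hz₂)
  rw [← ENNReal.ofReal_mul (by positivity)]
  refine ENNReal.ofReal_le_ofReal ?_
  rcases (dist_nonneg (x := z.1) (y := z.2)).eq_or_lt with hd | hd
  · simp [dist_eq_zero.1 hd.symm]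
  simp only [Real.rpow_one, mul_one]
  calc |u z.1 - u z.2| / dist z.1 z.2 ^ ((n : ℝ) + σ)
      = |u z.1 - u z.2| / dist z.1 z.2 ^ ((n : ℝ) + s) * dist z.1 z.2 ^ (s - σ) := by
        rw [show (n : ℝ) + s = n + σ + (s - σ) by ring, Real.rpow_add hd (n + σ),
          div_mul_eq_mul_div, mul_div_mul_right _ _ (Real.rpow_pos_of_pos hd _).ne']
    _ ≤ |u z.1 - u z.2| / dist z.1 z.2 ^ ((n : ℝ) + s) * M ^ (s - σ) := by
        gcongr
        exact hΩ _ hz₁ _ hz₂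
    _ = _ := mul_comm _ _

theorem gagliardoIntegral_one_le_of_holderConjugate {p q : ℝ} (hpq : p.HolderConjugate q)
    (hu : Measurable u) (s σ : ℝ) :
    gagliardoIntegral Ω σ 1 u ≤ gagliardoSeminorm Ω s p u *
      (∫⁻ x in Ω, ∫⁻ y in Ω, ENNReal.ofReal (dist x y ^ ((s - σ) * q - n))) ^ (1 / q) := by
  set ν := (volume.restrict Ω).prod (volume.restrict Ω)
  set F : EuclideanSpace ℝ (Fin n) × EuclideanSpace ℝ (Fin n) → ℝ≥0∞ :=
    fun z ↦ ENNReal.ofReal (|u z.1 - u z.2| / dist z.1 z.2 ^ (n / p + s))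
  set G : EuclideanSpace ℝ (Fin n) × EuclideanSpace ℝ (Fin n) → ℝ≥0∞ :=
    fun z ↦ ENNReal.ofReal (dist z.1 z.2 ^ (s - σ - n / q))
  have hFG : ∀ z : EuclideanSpace ℝ (Fin n) × EuclideanSpace ℝ (Fin n),
      ENNReal.ofReal (|u z.1 - u z.2| ^ (1 : ℝ) / dist z.1 z.2 ^ ((n : ℝ) + σ * 1)) =
        F z * G z := by
    intro z
    rcases (dist_nonneg (x := z.1) (y := z.2)).eq_or_lt with hd | hd
    · simp [F, dist_eq_zero.1 hd.symm]
    have hexp : (n : ℝ) / p + s = n + σ * 1 + (s - σ - n / q) := by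
      linear_combination (n : ℝ) * hpq.inv_add_inv_eq_one
    rw [← ENNReal.ofReal_mul (by positivity), hexp, Real.rpow_add hd (n + σ * 1), Real.rpow_one,
      div_mul_eq_mul_div, mul_div_mul_right _ _ (Real.rpow_pos_of_pos hd _).ne']
  have hF : ∀ z, F z ^ p =
      ENNReal.ofReal (|u z.1 - u z.2| ^ p / dist z.1 z.2 ^ ((n : ℝ) + s * p)) := by
    intro z
    rw [ENNReal.ofReal_rpow_of_nonneg (by positivity) hpq.nonneg,
      Real.div_rpow (abs_nonneg _) (by positivity), ← Real.rpow_mul dist_nonneg]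
    congr 3
    field_simp [hpq.ne_zero]
  have hG : ∀ z, G z ^ q = ENNReal.ofReal (dist z.1 z.2 ^ ((s - σ) * q - n)) := by
    intro z
    rw [ENNReal.ofReal_rpow_of_nonneg (by positivity) hpq.symm.nonneg,
      ← Real.rpow_mul dist_nonneg]
    congr 2
    field_simp [hpq.symm.ne_zero]
  calc gagliardoIntegral Ω σ 1 u = ∫⁻ z, (F * G) z ∂ν := by
        rw [gagliardoIntegral_eq_lintegral_prod hu]; exact lintegral_congr hFG
    _ ≤ (∫⁻ z, F z ^ p ∂ν) ^ (1 / p) * (∫⁻ z, G z ^ q ∂ν) ^ (1 / q) :=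
        ENNReal.lintegral_mul_le_Lp_mul_Lq ν hpq (by fun_prop) (by fun_prop)
    _ = _ := by
        simp_rw [hF, hG]
        rw [gagliardoSeminorm, gagliardoIntegral_eq_lintegral_prod hu,
          lintegral_lintegral (by fun_prop)]

theorem gagliardoIntegral_one_le_mul_gagliardoSeminorm {M σ s p : ℝ} {C : ℝ≥0∞}
    (hu : Measurable u) (hσs : σ ≤ s) (hM : 0 ≤ M) (hΩ : ∀ x ∈ Ω, ∀ y ∈ Ω, dist x y ≤ M)
    (hC : ∀ α, s - σ ≤ α →
      ∫⁻ x in Ω, ∫⁻ y in Ω, ENNReal.ofReal (dist x y ^ (α - n)) ≤ C * ENNReal.ofReal (M ^ α))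
    (hp : 1 ≤ p) :
    gagliardoIntegral Ω σ 1 u ≤
      max 1 C * ENNReal.ofReal (M ^ (s - σ)) * gagliardoSeminorm Ω s p u := by
  rcases hp.eq_or_lt with rfl | hp₁
  · rw [gagliardoSeminorm, div_one, ENNReal.rpow_one]
    calc gagliardoIntegral Ω σ 1 u ≤ ENNReal.ofReal (M ^ (s - σ)) * gagliardoIntegral Ω s 1 u :=
          gagliardoIntegral_one_le_mul_of_dist_le hσs hu hΩ
      _ ≤ _ := by gcongr; exact le_mul_of_one_le_left zero_le (le_max_left _ _)
  set q := p.conjExponent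
  have hpq : p.HolderConjugate q := .conjExponent hp₁
  have hq : 0 ≤ 1 / q := one_div_nonneg.2 hpq.symm.nonneg
  calc gagliardoIntegral Ω σ 1 u
      ≤ gagliardoSeminorm Ω s p u * (C * ENNReal.ofReal (M ^ ((s - σ) * q))) ^ (1 / q) := by
        refine (gagliardoIntegral_one_le_of_holderConjugate hpq hu s σ).trans ?_
        gcongr
        exact hC _ (le_mul_of_one_le_right (by linarith) hpq.symm.lt.le)
    _ = C ^ (1 / q) * ENNReal.ofReal (M ^ (s - σ)) * gagliardoSeminorm Ω s p u := by
        rw [ENNReal.mul_rpow_of_nonneg _ _ hq, ENNReal.ofReal_rpow_of_nonneg (by positivity) hq,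
          ← Real.rpow_mul hM, mul_assoc, mul_one_div_cancel hpq.symm.ne_zero, mul_one, mul_comm]
    _ ≤ _ := by
        gcongr
        exact C.rpow_le_max_one hq (div_le_one_of_le₀ hpq.symm.lt.le hpq.symm.nonneg)

theorem exists_gagliardoIntegral_one_le_mul_gagliardoSeminorm (hΩ : Bornology.IsBounded Ω)
    {σ s : ℝ} (hσs : σ < s) :
    ∃ K : ℝ≥0∞, K ≠ ∞ ∧ ∀ p : ℝ, 1 ≤ p → ∀ u : EuclideanSpace ℝ (Fin n) → ℝ, Measurable u →
      gagliardoIntegral Ω σ 1 u ≤ K * gagliardoSeminorm Ω s p u := by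
  obtain ⟨D, hD⟩ := isBounded_iff.1 hΩ
  set M := max 1 D + 1
  have hM : 1 ≤ M := by linarith [le_max_left 1 D]
  have hΩM : ∀ x ∈ Ω, ∀ y ∈ Ω, dist x y < M := fun x hx y hy ↦
    (hD hx hy).trans_lt (by linarith [le_max_right 1 D])
  set C := ((∫⁻ z in ball (0 : EuclideanSpace ℝ (Fin n)) M,
    ENNReal.ofReal (‖z‖ ^ (s - σ - n))) + volume Ω) * volume Ω
  have hC : C ≠ ∞ := by
    have hK := lintegral_ball_norm_rpow_sub_finrank_lt_top (μ := volume)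
      (E := EuclideanSpace ℝ (Fin n)) (sub_pos.2 hσs) M
    rw [finrank_euclideanSpace_fin] at hK
    exact mul_ne_top (add_ne_top.2 ⟨hK.ne, hΩ.measure_lt_top.ne⟩) hΩ.measure_lt_top.ne
  refine ⟨max 1 C * ENNReal.ofReal (M ^ (s - σ)),
    mul_ne_top (max_ne_top one_ne_top hC) ofReal_ne_top, fun p hp u hu ↦ ?_⟩
  refine gagliardoIntegral_one_le_mul_gagliardoSeminorm hu hσs.le (by linarith)
    (fun x hx y hy ↦ (hΩM x hx y hy).le) (fun α hα ↦ ?_) hp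
  simpa using lintegral_lintegral_dist_rpow_le (μ := volume) n (sub_nonneg.2 hσs.le) hα hM hΩM

end Gagliardo

theorem stmt1_general {n : ℕ} (Ω : Set (EuclideanSpace ℝ (Fin n)))
    (hΩb : Bornology.IsBounded Ω)
    (s σ : ℝ) (hσ : σ ∈ Set.Ioo (0 : ℝ) s) :
    ∃ c : ℝ, 0 < c ∧ ∀ p : ℝ, 1 ≤ p →
      ∀ u : EuclideanSpace ℝ (Fin n) → ℝ, Measurable u →
        sobolevNorm Ω σ 1 u ≤ ENNReal.ofReal c * sobolevNorm Ω s p u := by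
  obtain ⟨K, hK, hKu⟩ := exists_gagliardoIntegral_one_le_mul_gagliardoSeminorm hΩb hσ.2
  have hV : max 1 (volume Ω) ≠ ∞ := max_ne_top one_ne_top hΩb.measure_lt_top.ne
  have hV₁ : 1 ≤ (max 1 (volume Ω)).toReal := by
    simpa using ENNReal.toReal_mono hV (le_max_left 1 (volume Ω))
  refine ⟨(max 1 (volume Ω)).toReal + K.toReal, by positivity, fun p hp u hu ↦ ?_⟩
  calc sobolevNorm Ω σ 1 u
      = (∫⁻ x in Ω, ENNReal.ofReal |u x|) + gagliardoIntegral Ω σ 1 u := by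
        simp [sobolevNorm, gagliardoSeminorm]
    _ ≤ max 1 (volume Ω) * (∫⁻ x in Ω, ENNReal.ofReal (|u x| ^ p)) ^ (1 / p) +
          K * gagliardoSeminorm Ω s p u := by
        gcongr
        · simpa using lintegral_ofReal_abs_le_max_one_mul (μ := volume.restrict Ω)
            hu.aestronglyMeasurable hp
        · exact hKu p hp u hu
    _ ≤ _ := by
        rw [sobolevNorm, mul_add, ENNReal.ofReal_add (by positivity) toReal_nonneg,
          ofReal_toReal hV, ofReal_toReal hK]
        gcongr
        exacts [le_self_add, le_add_self]

theorem stmt1 {n : ℕ} (Ω : Set (EuclideanSpace ℝ (Fin n)))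
    (hΩo : IsOpen Ω) (hΩb : Bornology.IsBounded Ω)
    (s σ : ℝ) (hs : s ∈ Set.Ioo (0 : ℝ) 1) (hσ : σ ∈ Set.Ioo (0 : ℝ) s) :
    ∃ c : ℝ, 0 < c ∧ ∀ p : ℝ, 1 ≤ p →
      ∀ u : EuclideanSpace ℝ (Fin n) → ℝ, Measurable u →
        sobolevNorm Ω σ 1 u ≤ ENNReal.ofReal c * sobolevNorm Ω s p u :=
  stmt1_general Ω hΩb s σ hσ
end

section
/- Let Ω ⊂ ℝⁿ be a bounded open set and φ : ℝⁿ∖Ω → ℝ measurable. The following are equivalent: (i) there exists q > 1 such that sup_{p∈(1,q)} T_s^p(φ)(x) ∈ L¹(Ω), where T_s^p(φ)(x) = ∫_{ℝⁿ∖Ω} |φ(y)|^p/|x-y|^{n+sp} dy; (ii) there exists q > 1 such that sup_{p∈(1,q)} ‖T_s^p(φ)‖_{L¹(Ω)} < ∞; (iii) there exists q > 1 such that both T_s^1(φ) ∈ L¹(Ω) and T_s^q(φ) ∈ L¹(Ω). -/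
open MeasureTheory ENNReal Filter

/-!
For fixed `x ∈ Ω` and `y ∉ Ω`, the integrand `|φ y|^p / |x-y|^{n+sp}` of the tail equals
`b^p / |x-y|^n` with `b = |φ y| / |x-y|^s`, so on `[p₀, p₁]` it is bounded by its values at the
endpoints. Hence the supremum of the tails over `p ∈ (1, q)` is dominated by `T^1 + T^q`, which
gives (iii) ⟹ (i). Conversely the integrand is continuous in `p` away from `p = 0`, so Fatou's
lemma along a sequence `p_k ↓ 1` bounds `∫_Ω T^1` by `sup_{p ∈ (1,q)} ∫_Ω T^p`, which
gives (ii) ⟹ (iii); (i) ⟹ (ii) is monotonicity of the integral.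
-/

open Set Topology

lemma Real.rpow_le_max_of_mem_Icc {b p₀ p₁ p : ℝ} (hb : 0 ≤ b) (hp₀ : 0 ≤ p₀)
    (hp : p ∈ Icc p₀ p₁) : b ^ p ≤ max (b ^ p₀) (b ^ p₁) := by
  rcases le_total b 1 with h | h
  · exact le_max_of_le_left (Real.rpow_le_rpow_of_exponent_ge' hb h hp₀ hp.1)
  · exact le_max_of_le_right (Real.rpow_le_rpow_of_exponent_le h hp.2)

lemma Real.rpow_div_rpow_le_add_of_mem_Icc {a d N s p₀ p₁ p : ℝ} (ha : 0 ≤ a) (hd : 0 < d)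
    (hp₀ : 0 ≤ p₀) (hp : p ∈ Icc p₀ p₁) :
    a ^ p / d ^ (N + s * p) ≤ a ^ p₀ / d ^ (N + s * p₀) + a ^ p₁ / d ^ (N + s * p₁) := by
  have factor : ∀ r, a ^ r / d ^ (N + s * r) = (a / d ^ s) ^ r / d ^ N := fun r => by
    rw [Real.div_rpow ha (by positivity), ← Real.rpow_mul hd.le, Real.rpow_add hd]
    ring
  have hb : 0 ≤ a / d ^ s := by positivity
  rw [factor, factor, factor, ← add_div]
  gcongr
  exact (Real.rpow_le_max_of_mem_Icc hb hp₀ hp).trans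
    (max_le_add_of_nonneg (by positivity) (by positivity))

lemma Real.continuousAt_rpow_div_rpow_add_mul {a d N s p₀ : ℝ} (hd : 0 < d) (hp₀ : p₀ ≠ 0) :
    ContinuousAt (fun p => a ^ p / d ^ (N + s * p)) p₀ :=
  (Real.continuousAt_const_rpow' hp₀).div
    ((Real.continuousAt_const_rpow hd.ne').comp (by fun_prop)) (by positivity)

section Tail

variable {n : ℕ} {Ω : Set (EuclideanSpace ℝ (Fin n))} {s : ℝ}
  {φ : EuclideanSpace ℝ (Fin n) → ℝ}

lemma measurable_tail_integrand (hφ : Measurable φ) (p : ℝ) :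
    Measurable (fun z : EuclideanSpace ℝ (Fin n) × EuclideanSpace ℝ (Fin n) =>
      ENNReal.ofReal (|φ z.2| ^ p / dist z.1 z.2 ^ ((n : ℝ) + s * p))) := by
  fun_prop

lemma measurable_tail (hφ : Measurable φ) (p : ℝ) : Measurable (tail Ω s p φ) :=
  (measurable_tail_integrand hφ p).lintegral_prod_right'

lemma tail_le_tail_add_tail (hΩ : MeasurableSet Ω) (hφ : Measurable φ)
    {x : EuclideanSpace ℝ (Fin n)} (hx : x ∈ Ω) {p₀ p₁ p : ℝ} (hp₀ : 0 ≤ p₀)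
    (hp : p ∈ Icc p₀ p₁) : tail Ω s p φ x ≤ tail Ω s p₀ φ x + tail Ω s p₁ φ x := by
  calc tail Ω s p φ x
      ≤ ∫⁻ y in Ωᶜ, (ENNReal.ofReal (|φ y| ^ p₀ / dist x y ^ ((n : ℝ) + s * p₀))
          + ENNReal.ofReal (|φ y| ^ p₁ / dist x y ^ ((n : ℝ) + s * p₁))) :=
        setLIntegral_mono' hΩ.compl fun y hy =>
          (ENNReal.ofReal_le_ofReal (Real.rpow_div_rpow_le_add_of_mem_Icc (abs_nonneg _)
            (dist_pos.2 (ne_of_mem_of_not_mem hx hy)) hp₀ hp)).trans ENNReal.ofReal_add_le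
    _ = tail Ω s p₀ φ x + tail Ω s p₁ φ x :=
        lintegral_add_left ((measurable_tail_integrand hφ p₀).comp measurable_prodMk_left) _

lemma tail_le_liminf_tail (hΩ : MeasurableSet Ω) (hφ : Measurable φ)
    {x : EuclideanSpace ℝ (Fin n)} (hx : x ∈ Ω) {p₀ : ℝ} (hp₀ : p₀ ≠ 0) {u : ℕ → ℝ}
    (hu : Tendsto u atTop (𝓝 p₀)) :
    tail Ω s p₀ φ x ≤ liminf (fun k => tail Ω s (u k) φ x) atTop := by
  calc tail Ω s p₀ φ x
      = ∫⁻ y in Ωᶜ, liminf (fun k =>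
          ENNReal.ofReal (|φ y| ^ u k / dist x y ^ ((n : ℝ) + s * u k))) atTop :=
        setLIntegral_congr_fun hΩ.compl fun y hy =>
          (ENNReal.continuous_ofReal.continuousAt.comp
            (Real.continuousAt_rpow_div_rpow_add_mul
              (dist_pos.2 (ne_of_mem_of_not_mem hx hy)) hp₀) |>.tendsto.comp hu).liminf_eq.symm
    _ ≤ liminf (fun k => tail Ω s (u k) φ x) atTop :=
        lintegral_liminf_le fun k =>
          (measurable_tail_integrand hφ (u k)).comp measurable_prodMk_left

lemma lintegral_tail_le_iSup_lintegral_tail (hΩ : MeasurableSet Ω) (hφ : Measurable φ)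
    {p₀ q : ℝ} (hp₀ : 0 < p₀) (hp₀q : p₀ < q) :
    ∫⁻ x in Ω, tail Ω s p₀ φ x ≤ ⨆ p ∈ Ioo p₀ q, ∫⁻ x in Ω, tail Ω s p φ x := by
  obtain ⟨u, -, hu_mem, hu⟩ := exists_seq_strictAnti_tendsto' hp₀q
  calc ∫⁻ x in Ω, tail Ω s p₀ φ x
      ≤ ∫⁻ x in Ω, liminf (fun k => tail Ω s (u k) φ x) atTop :=
        setLIntegral_mono' hΩ fun x hx => tail_le_liminf_tail hΩ hφ hx hp₀.ne' hu
    _ ≤ liminf (fun k => ∫⁻ x in Ω, tail Ω s (u k) φ x) atTop :=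
        lintegral_liminf_le fun k => measurable_tail hφ (u k)
    _ ≤ ⨆ p ∈ Ioo p₀ q, ∫⁻ x in Ω, tail Ω s p φ x :=
        liminf_le_of_frequently_le' (Frequently.of_forall fun k =>
          le_iSup₂ (f := fun p (_ : p ∈ Ioo p₀ q) => ∫⁻ x in Ω, tail Ω s p φ x) (u k) (hu_mem k))

lemma lintegral_biSup_tail_le_add (hΩ : MeasurableSet Ω) (hφ : Measurable φ) {p₀ p₁ : ℝ}
    (hp₀ : 0 ≤ p₀) :
    ∫⁻ x in Ω, ⨆ p ∈ Icc p₀ p₁, tail Ω s p φ x ≤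
      (∫⁻ x in Ω, tail Ω s p₀ φ x) + ∫⁻ x in Ω, tail Ω s p₁ φ x := by
  rw [← lintegral_add_left (measurable_tail hφ p₀) (tail Ω s p₁ φ)]
  exact setLIntegral_mono' hΩ fun x hx =>
    iSup₂_le fun p hp => tail_le_tail_add_tail hΩ hφ hx hp₀ hp

end Tail

theorem stmt4_general {n : ℕ} (Ω : Set (EuclideanSpace ℝ (Fin n)))
    (hΩo : IsOpen Ω)
    (s : ℝ)
    (φ : EuclideanSpace ℝ (Fin n) → ℝ) (hφ : Measurable φ) :
    ((∃ q : ℝ, 1 < q ∧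
        (∫⁻ x in Ω, ⨆ p ∈ Set.Ioo (1 : ℝ) q, tail Ω s p φ x) < ⊤) ↔
      (∃ q : ℝ, 1 < q ∧
        (⨆ p ∈ Set.Ioo (1 : ℝ) q, ∫⁻ x in Ω, tail Ω s p φ x) < ⊤)) ∧
    ((∃ q : ℝ, 1 < q ∧
        (∫⁻ x in Ω, ⨆ p ∈ Set.Ioo (1 : ℝ) q, tail Ω s p φ x) < ⊤) ↔
      (∃ q : ℝ, 1 < q ∧
        (∫⁻ x in Ω, tail Ω s 1 φ x) < ⊤ ∧ (∫⁻ x in Ω, tail Ω s q φ x) < ⊤)) := by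
  have hΩ := hΩo.measurableSet
  have i_to_ii : (∃ q : ℝ, 1 < q ∧ (∫⁻ x in Ω, ⨆ p ∈ Ioo (1 : ℝ) q, tail Ω s p φ x) < ⊤) →
      ∃ q : ℝ, 1 < q ∧ (⨆ p ∈ Ioo (1 : ℝ) q, ∫⁻ x in Ω, tail Ω s p φ x) < ⊤ :=
    fun ⟨q, hq, h⟩ => ⟨q, hq, (iSup₂_lintegral_le _).trans_lt h⟩
  have ii_to_iii : (∃ q : ℝ, 1 < q ∧ (⨆ p ∈ Ioo (1 : ℝ) q, ∫⁻ x in Ω, tail Ω s p φ x) < ⊤) →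
      ∃ q : ℝ, 1 < q ∧
        (∫⁻ x in Ω, tail Ω s 1 φ x) < ⊤ ∧ (∫⁻ x in Ω, tail Ω s q φ x) < ⊤ := by
    rintro ⟨q, hq, h⟩
    refine ⟨(1 + q) / 2, by linarith,
      (lintegral_tail_le_iSup_lintegral_tail hΩ hφ one_pos hq).trans_lt h, ?_⟩
    exact (le_iSup₂ (f := fun p (_ : p ∈ Ioo (1 : ℝ) q) => ∫⁻ x in Ω, tail Ω s p φ x)
      ((1 + q) / 2) ⟨by linarith, by linarith⟩).trans_lt h
  have iii_to_i : (∃ q : ℝ, 1 < q ∧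
        (∫⁻ x in Ω, tail Ω s 1 φ x) < ⊤ ∧ (∫⁻ x in Ω, tail Ω s q φ x) < ⊤) →
      ∃ q : ℝ, 1 < q ∧ (∫⁻ x in Ω, ⨆ p ∈ Ioo (1 : ℝ) q, tail Ω s p φ x) < ⊤ := by
    rintro ⟨q, hq, h₁, h_q⟩
    refine ⟨q, hq, lt_of_le_of_lt ?_ (ENNReal.add_lt_top.2 ⟨h₁, h_q⟩)⟩
    exact (lintegral_mono fun x => biSup_mono fun _ hp => Ioo_subset_Icc_self hp).trans
      (lintegral_biSup_tail_le_add hΩ hφ zero_le_one)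
  exact ⟨⟨i_to_ii, iii_to_i ∘ ii_to_iii⟩, ⟨ii_to_iii ∘ i_to_ii, iii_to_i⟩⟩

theorem stmt4 {n : ℕ} (Ω : Set (EuclideanSpace ℝ (Fin n)))
    (hΩo : IsOpen Ω) (hΩb : Bornology.IsBounded Ω)
    (s : ℝ) (hs : s ∈ Set.Ioo (0 : ℝ) 1)
    (φ : EuclideanSpace ℝ (Fin n) → ℝ) (hφ : Measurable φ) :
    ((∃ q : ℝ, 1 < q ∧
        (∫⁻ x in Ω, ⨆ p ∈ Set.Ioo (1 : ℝ) q, tail Ω s p φ x) < ⊤) ↔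
      (∃ q : ℝ, 1 < q ∧
        (⨆ p ∈ Set.Ioo (1 : ℝ) q, ∫⁻ x in Ω, tail Ω s p φ x) < ⊤)) ∧
    ((∃ q : ℝ, 1 < q ∧
        (∫⁻ x in Ω, ⨆ p ∈ Set.Ioo (1 : ℝ) q, tail Ω s p φ x) < ⊤) ↔
      (∃ q : ℝ, 1 < q ∧
        (∫⁻ x in Ω, tail Ω s 1 φ x) < ⊤ ∧ (∫⁻ x in Ω, tail Ω s q φ x) < ⊤)) :=
  stmt4_general Ω hΩo s φ hφ
end

section
/- Let Ω ⊂ ℝⁿ be a bounded open set with Lipschitz boundary, s ∈ (0,1), p ∈ [1, 1/s), and φ : ℝⁿ∖Ω → ℝ with tail T_s^p(φ) ∈ L¹(Ω). If u = φ a.e. outside Ω and u minimizes the energy E_s^p among functions agreeing with φ outside Ω, then E_s^p(u) ≤ (1/p)‖T_s^p(φ)‖_{L¹(Ω)} and [u]_{W^{s,p}(Ω)} ≤ 2^{1/p} ‖T_s^p(φ)‖_{L¹(Ω)}^{1/p}. -/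
open MeasureTheory ENNReal Filter

/-! The function equal to `0` on `Ω` and to `φ` outside is an admissible competitor, and its
energy only sees the pairs `(x, y) ∈ Ω × Ωᶜ` (twice, by symmetry), where it is the tail of `φ`;
this gives the energy bound. Splitting `Q(Ω)` into `Ω × Ω` and the two mixed parts shows that the
Gagliardo integral of `u` is at most `2p` times its energy, which gives the seminorm bound. -/

section SymmetricSplitting

variable {α : Type*} [MeasurableSpace α] {μ : Measure α} [SFinite μ]

theorem setLIntegral_fst_mem_or_snd_mem_of_symm {Ω : Set α} (hΩ : MeasurableSet Ω)
    {g : α × α → ℝ≥0∞} (hg : Measurable g) (hsymm : ∀ x y, g (x, y) = g (y, x)) :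
    ∫⁻ z in {z : α × α | z.1 ∈ Ω ∨ z.2 ∈ Ω}, g z ∂μ.prod μ =
      (∫⁻ x in Ω, ∫⁻ y in Ω, g (x, y) ∂μ ∂μ) + 2 * ∫⁻ x in Ω, ∫⁻ y in Ωᶜ, g (x, y) ∂μ ∂μ := by
  have hdecomp : {z : α × α | z.1 ∈ Ω ∨ z.2 ∈ Ω} = (Ω ×ˢ Ω ∪ Ω ×ˢ Ωᶜ) ∪ Ωᶜ ×ˢ Ω := by
    ext ⟨x, y⟩
    simp only [Set.mem_ofPred_eq, Set.mem_union, Set.mem_prod, Set.mem_compl_iff]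
    tauto
  have hdisj_mixed : Disjoint (Ω ×ˢ Ω ∪ Ω ×ˢ Ωᶜ) (Ωᶜ ×ˢ Ω) :=
    Set.disjoint_union_left.2
      ⟨Set.disjoint_prod.2 (Or.inl disjoint_compl_right),
        Set.disjoint_prod.2 (Or.inl disjoint_compl_right)⟩
  have hdisj_inner : Disjoint (Ω ×ˢ Ω) (Ω ×ˢ Ωᶜ) :=
    Set.disjoint_prod.2 (Or.inr disjoint_compl_right)
  have hswap : ∫⁻ z in Ωᶜ ×ˢ Ω, g z ∂μ.prod μ = ∫⁻ x in Ω, ∫⁻ y in Ωᶜ, g (x, y) ∂μ ∂μ := by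
    rw [setLIntegral_prod_symm _ hg.aemeasurable]
    simp only [hsymm]
  rw [hdecomp, lintegral_union (hΩ.compl.prod hΩ) hdisj_mixed,
    lintegral_union (hΩ.prod hΩ.compl) hdisj_inner, hswap,
    setLIntegral_prod _ hg.aemeasurable, setLIntegral_prod _ hg.aemeasurable, add_assoc, two_mul]

end SymmetricSplitting

section FractionalEnergy

variable {n : ℕ} {Ω : Set (EuclideanSpace ℝ (Fin n))} {s q : ℝ}

noncomputable def gagliardoKernel (s q : ℝ) (u : EuclideanSpace ℝ (Fin n) → ℝ)
    (x y : EuclideanSpace ℝ (Fin n)) : ℝ≥0∞ :=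
  ENNReal.ofReal (|u x - u y| ^ q / dist x y ^ ((n : ℝ) + s * q))

theorem measurable_gagliardoKernel {u : EuclideanSpace ℝ (Fin n) → ℝ} (hu : Measurable u) :
    Measurable (fun z : EuclideanSpace ℝ (Fin n) × EuclideanSpace ℝ (Fin n) =>
      gagliardoKernel s q u z.1 z.2) := by
  unfold gagliardoKernel
  have hdiff : Measurable fun z : EuclideanSpace ℝ (Fin n) × EuclideanSpace ℝ (Fin n) =>
      |u z.1 - u z.2| := ((hu.comp measurable_fst).sub (hu.comp measurable_snd)).abs
  have hdist : Measurable fun z : EuclideanSpace ℝ (Fin n) × EuclideanSpace ℝ (Fin n) =>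
      dist z.1 z.2 := measurable_dist
  exact ENNReal.measurable_ofReal.comp ((hdiff.pow_const q).div (hdist.pow_const _))

theorem gagliardoKernel_comm (u : EuclideanSpace ℝ (Fin n) → ℝ) (x y : EuclideanSpace ℝ (Fin n)) :
    gagliardoKernel s q u x y = gagliardoKernel s q u y x := by
  rw [gagliardoKernel, gagliardoKernel, abs_sub_comm, dist_comm]

theorem energy_eq_gagliardoIntegral_add (hΩ : MeasurableSet Ω)
    {u : EuclideanSpace ℝ (Fin n) → ℝ} (hu : Measurable u) :
    energy Ω s q u = (ENNReal.ofReal (2 * q))⁻¹ *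
      (gagliardoIntegral Ω s q u + 2 * ∫⁻ x in Ω, ∫⁻ y in Ωᶜ, gagliardoKernel s q u x y) := by
  unfold energy
  congr 1
  exact setLIntegral_fst_mem_or_snd_mem_of_symm hΩ (measurable_gagliardoKernel hu)
    fun x y => gagliardoKernel_comm u x y

theorem gagliardoIntegral_le_energy (hΩ : MeasurableSet Ω) (hq : 0 < q)
    {u : EuclideanSpace ℝ (Fin n) → ℝ} (hu : Measurable u) :
    gagliardoIntegral Ω s q u ≤ ENNReal.ofReal (2 * q) * energy Ω s q u := by
  rw [energy_eq_gagliardoIntegral_add hΩ hu, ← mul_assoc,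
    ENNReal.mul_inv_cancel (by simpa using hq) ofReal_ne_top, one_mul]
  exact le_self_add

theorem energy_indicator_compl (hΩ : MeasurableSet Ω) (hq : 0 < q)
    {φ : EuclideanSpace ℝ (Fin n) → ℝ} (hφ : Measurable φ) :
    energy Ω s q (Ωᶜ.indicator φ) = ENNReal.ofReal (1 / q) * ∫⁻ x in Ω, tail Ω s q φ x := by
  have hinner : gagliardoIntegral Ω s q (Ωᶜ.indicator φ) = 0 := by
    refine setLIntegral_eq_zero hΩ fun x hx => setLIntegral_eq_zero hΩ fun y hy => ?_
    simp [Set.indicator_of_notMem (Set.notMem_compl_iff.2 hx),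
      Set.indicator_of_notMem (Set.notMem_compl_iff.2 hy), Real.zero_rpow hq.ne']
  have hcross : ∫⁻ x in Ω, ∫⁻ y in Ωᶜ, gagliardoKernel s q (Ωᶜ.indicator φ) x y =
      ∫⁻ x in Ω, tail Ω s q φ x := by
    refine setLIntegral_congr_fun hΩ fun x hx => setLIntegral_congr_fun hΩ.compl fun y hy => ?_
    simp [gagliardoKernel, Set.indicator_of_notMem (Set.notMem_compl_iff.2 hx),
      Set.indicator_of_mem hy]
  have hconst : (ENNReal.ofReal (2 * q))⁻¹ * 2 = ENNReal.ofReal (1 / q) := by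
    rw [ENNReal.ofReal_mul zero_le_two, ENNReal.ofReal_ofNat,
      ENNReal.mul_inv (Or.inl two_ne_zero) (Or.inl ofNat_ne_top), mul_right_comm,
      ENNReal.inv_mul_cancel two_ne_zero ofNat_ne_top, one_mul, one_div,
      ENNReal.ofReal_inv_of_pos hq]
  rw [energy_eq_gagliardoIntegral_add hΩ (hφ.indicator hΩ.compl), hinner, hcross, zero_add,
    ← mul_assoc, hconst]

end FractionalEnergy

theorem stmt7_general {n : ℕ} (Ω : Set (EuclideanSpace ℝ (Fin n)))
    (hΩo : IsOpen Ω)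
    (s p : ℝ) (hp : 1 ≤ p)
    (φ u : EuclideanSpace ℝ (Fin n) → ℝ) (hφ : Measurable φ) (hu : Measurable u)
    (hmin : ∀ v : EuclideanSpace ℝ (Fin n) → ℝ, Measurable v →
      (∀ᵐ y ∂(volume.restrict Ωᶜ), v y = φ y) → energy Ω s p u ≤ energy Ω s p v) :
    energy Ω s p u ≤ ENNReal.ofReal (1 / p) * (∫⁻ x in Ω, tail Ω s p φ x) ∧
    gagliardoSeminorm Ω s p u ≤
      (2 : ℝ≥0∞) ^ (1 / p) * (∫⁻ x in Ω, tail Ω s p φ x) ^ (1 / p) := by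
  have hΩ : MeasurableSet Ω := hΩo.measurableSet
  have hp0 : 0 < p := zero_lt_one.trans_le hp
  set T := ∫⁻ x in Ω, tail Ω s p φ x
  have henergy : energy Ω s p u ≤ ENNReal.ofReal (1 / p) * T :=
    (hmin _ (hφ.indicator hΩ.compl) (indicator_ae_eq_restrict hΩ.compl)).trans_eq
      (energy_indicator_compl hΩ hp0 hφ)
  have hgagliardo : gagliardoIntegral Ω s p u ≤ 2 * T :=
    calc gagliardoIntegral Ω s p u ≤ ENNReal.ofReal (2 * p) * energy Ω s p u :=
          gagliardoIntegral_le_energy hΩ hp0 hu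
      _ ≤ ENNReal.ofReal (2 * p) * (ENNReal.ofReal (1 / p) * T) := by gcongr
      _ = 2 * T := by
          rw [← mul_assoc, ← ENNReal.ofReal_mul (by positivity), mul_assoc,
            mul_one_div_cancel hp0.ne', mul_one, ENNReal.ofReal_ofNat]
  refine ⟨henergy, ?_⟩
  calc gagliardoSeminorm Ω s p u = gagliardoIntegral Ω s p u ^ (1 / p) := rfl
    _ ≤ (2 * T) ^ (1 / p) := by gcongr
    _ = 2 ^ (1 / p) * T ^ (1 / p) := ENNReal.mul_rpow_of_nonneg _ _ (by positivity)

theorem stmt7 {n : ℕ} (Ω : Set (EuclideanSpace ℝ (Fin n)))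
    (hΩo : IsOpen Ω) (hΩb : Bornology.IsBounded Ω) (hΩlip : HasLipschitzBoundary Ω)
    (s p : ℝ) (hs : s ∈ Set.Ioo (0 : ℝ) 1) (hp : 1 ≤ p) (hp' : p < 1 / s)
    (φ u : EuclideanSpace ℝ (Fin n) → ℝ) (hφ : Measurable φ) (hu : Measurable u)
    (hT : (∫⁻ x in Ω, tail Ω s p φ x) < ⊤)
    (hext : ∀ᵐ y ∂(volume.restrict Ωᶜ), u y = φ y)
    (hmin : ∀ v : EuclideanSpace ℝ (Fin n) → ℝ, Measurable v →
      (∀ᵐ y ∂(volume.restrict Ωᶜ), v y = φ y) → energy Ω s p u ≤ energy Ω s p v) :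
    energy Ω s p u ≤ ENNReal.ofReal (1 / p) * (∫⁻ x in Ω, tail Ω s p φ x) ∧
    gagliardoSeminorm Ω s p u ≤
      (2 : ℝ≥0∞) ^ (1 / p) * (∫⁻ x in Ω, tail Ω s p φ x) ^ (1 / p) :=
  stmt7_general Ω hΩo s p hp φ u hφ hu hmin
end

section
/- Let Ω ⊂ ℝⁿ be a bounded open set with Lipschitz boundary and s ∈ (0,1). Suppose u ∈ W^{s,1}(Ω) (extended measurably to ℝⁿ) is a weak solution of the fractional 1-Laplace equation in Ω, i.e., there exists an antisymmetric z ∈ L^∞(Q(Ω)) with ‖z‖_∞ ≤ 1, z(x,y)(u(x)-u(y)) = |u(x)-u(y)| a.e. in Q(Ω), and ∬_{Q(Ω)} z(x,y)(w(x)-w(y))/|x-y|^{n+s} dx dy = 0 for all w ∈ W^{s,1}(Ω) vanishing a.e. outside Ω. Then u is an s-minimal function: for every v with v = u a.e. in Ω^c and v ∈ W^{s,1}(Ω), ∬_{Q(Ω)} [|u(x)-u(y)| - |v(x)-v(y)|]/|x-y|^{n+s} dx dy ≤ 0. -/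
open MeasureTheory ENNReal Filter

/-!
Put `w = u - v`, which vanishes outside `Ω`. Since `|z| ≤ 1` and `z (u(x) - u(y)) = |u(x) - u(y)|`,
pointwise on `Q(Ω)`
`z (w(x) - w(y)) = |u(x) - u(y)| - z (v(x) - v(y)) ≥ |u(x) - u(y)| - |v(x) - v(y)|`,
so testing the equation with `w` gives the claim, provided `z (w(x) - w(y)) / |x - y|^{n+s}` is
integrable on `Q(Ω)`. Integrability is only clear for bounded test functions: on `Ω × Ωᶜ` the
integrand is then `O(|x - y|^{-n-s})`, and
`∫_Ω ∫_{Ωᶜ} |x - y|^{-n-s} dy dx ≲ ∫_Ω dist(x, ∂Ω)^{-s} dx < ∞`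
because a Lipschitz boundary has `|{x ∈ Ω : dist(x, ∂Ω) < t}| = O(t)` and `s < 1`.
So we test with the truncations `T_N w = max (-N) (min N w)` instead and let `N → ∞` by Fatou's
lemma. The lower bound needed for Fatou comes from the Gagliardo integrands of `u` and `v` on
`Ω × Ω`, and off `Ω × Ω` from the fact that `u - T_N w` lies between `u` and `v`.
-/

open Metric Set

section Thickening

variable {X : Type*} [PseudoMetricSpace X] [MeasurableSpace X]

/-- `s` has finite codimension-one upper Minkowski content. -/
def HasLinearThickeningBound (μ : Measure X) (s : Set X) : Prop :=
  ∃ r₀ > 0, ∃ C ≠ ∞, ∀ t ∈ Ioo 0 r₀, μ (thickening t s) ≤ C * ENNReal.ofReal t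

variable {μ : Measure X} {s t : Set X}

lemma hasLinearThickeningBound_empty : HasLinearThickeningBound μ ∅ :=
  ⟨1, one_pos, 0, zero_ne_top, fun t _ => by simp⟩

lemma HasLinearThickeningBound.mono (ht : HasLinearThickeningBound μ t) (hst : s ⊆ t) :
    HasLinearThickeningBound μ s := by
  obtain ⟨r₀, hr₀, C, hC, hbound⟩ := ht
  exact ⟨r₀, hr₀, C, hC, fun τ hτ =>
    (measure_mono (thickening_subset_of_subset τ hst)).trans (hbound τ hτ)⟩

lemma HasLinearThickeningBound.union (hs : HasLinearThickeningBound μ s)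
    (ht : HasLinearThickeningBound μ t) : HasLinearThickeningBound μ (s ∪ t) := by
  obtain ⟨r₁, hr₁, C₁, hC₁, hs⟩ := hs
  obtain ⟨r₂, hr₂, C₂, hC₂, ht⟩ := ht
  refine ⟨min r₁ r₂, lt_min hr₁ hr₂, C₁ + C₂, add_ne_top.mpr ⟨hC₁, hC₂⟩, fun τ hτ => ?_⟩
  rw [thickening_union, add_mul]
  exact (measure_union_le _ _).trans (add_le_add
    (hs τ ⟨hτ.1, hτ.2.trans_le (min_le_left _ _)⟩) (ht τ ⟨hτ.1, hτ.2.trans_le (min_le_right _ _)⟩))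

end Thickening

section Slab

variable {E : Type*} [NormedAddCommGroup E] [NormedSpace ℝ E] [MeasurableSpace E] [BorelSpace E]

/- The `⌈R / 2h⌉` translates of the slab by `2 h j • e` are disjoint, since `F` is shifted by
`2 h j` on the `j`-th one, and they lie in the doubled ball. -/
lemma measure_ball_inter_abs_lt_le (μ : Measure E) [μ.IsAddRightInvariant] {F : E → ℝ}
    (hF : Continuous F) {e : E} (he : ‖e‖ = 1) (hFe : ∀ y (t : ℝ), F (y + t • e) = F y + t)
    (c : E) {R h : ℝ} (hR : 0 < R) (hh : 0 < h) :
    μ {y ∈ ball c R | |F y| < h} ≤ ENNReal.ofReal (2 * h / R) * μ (ball c (2 * R)) := by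
  set S := {y ∈ ball c R | |F y| < h}
  set M := ⌈R / (2 * h)⌉₊
  have hS : MeasurableSet S :=
    (isOpen_ball.inter (isOpen_lt (continuous_abs.comp hF) continuous_const)).measurableSet
  let T : ℕ → Set E := fun j => (· + (-(2 * h * j)) • e) ⁻¹' S
  have hF_T : ∀ j, ∀ y ∈ T j, |F y - 2 * h * j| < h := fun j y hy => by
    have := hFe (y + (-(2 * h * j)) • e) (2 * h * j)
    rw [add_assoc, ← add_smul, neg_add_cancel, zero_smul, add_zero] at this
    simpa [this] using hy.2
  have hT_disj : Pairwise (Function.onFun Disjoint T) := by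
    intro i j hij
    refine Set.disjoint_left.mpr fun y hyi hyj => hij ?_
    have hi := abs_lt.mp (hF_T i y hyi)
    have hj := abs_lt.mp (hF_T j y hyj)
    have h1 : i < j + 1 := by exact_mod_cast (show (i : ℝ) < j + 1 by nlinarith)
    have h2 : j < i + 1 := by exact_mod_cast (show (j : ℝ) < i + 1 by nlinarith)
    omega
  have hT_sub : ∀ j ∈ Finset.range M, T j ⊆ ball c (2 * R) := by
    intro j hj y hy
    have hjM : (j : ℝ) + 1 ≤ M := by exact_mod_cast Finset.mem_range.mp hj
    have hM : (M : ℝ) < R / (2 * h) + 1 := Nat.ceil_lt_add_one (by positivity)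
    have hjR : 2 * h * j < R := by
      have := (lt_div_iff₀ (by positivity)).mp (show (j : ℝ) < R / (2 * h) by linarith)
      linarith
    have hdist : dist y (y + (-(2 * h * j)) • e) = 2 * h * j := by
      rw [dist_eq_norm, sub_add_cancel_left, norm_neg, norm_smul, he, mul_one, norm_neg,
        Real.norm_of_nonneg (by positivity)]
    calc dist y c ≤ dist y (y + (-(2 * h * j)) • e) + dist (y + (-(2 * h * j)) • e) c :=
          dist_triangle _ _ _
      _ < 2 * R := by rw [hdist]; linarith [mem_ball.mp hy.1]
  have hM_vol : (M : ℝ≥0∞) * μ S ≤ μ (ball c (2 * R)) :=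
    calc (M : ℝ≥0∞) * μ S = ∑ j ∈ Finset.range M, μ (T j) := by
          simp [T, measure_preimage_add_right]
      _ = μ (⋃ j ∈ Finset.range M, T j) :=
          (measure_biUnion_finset (hT_disj.set_pairwise _)
            fun j _ => hS.preimage (measurable_add_const _)).symm
      _ ≤ μ (ball c (2 * R)) := measure_mono (iUnion₂_subset hT_sub)
  have hM_ge : 1 ≤ ENNReal.ofReal (2 * h / R) * M := by
    rw [← ENNReal.ofReal_natCast, ← ENNReal.ofReal_mul (by positivity), ENNReal.one_le_ofReal,
      div_mul_eq_mul_div, le_div_iff₀ hR, one_mul]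
    have := Nat.le_ceil (R / (2 * h))
    rwa [div_le_iff₀ (by positivity), mul_comm] at this
  calc μ S ≤ ENNReal.ofReal (2 * h / R) * M * μ S := le_mul_of_one_le_left zero_le hM_ge
    _ ≤ ENNReal.ofReal (2 * h / R) * μ (ball c (2 * R)) := by
      rw [mul_assoc]; gcongr


variable {μ : Measure E}

/- The `t`-thickening of `A` lies in the slab `|F| < (L + 1) t`. -/
lemma hasLinearThickeningBound_of_eqOn_zero [ProperSpace E] [IsFiniteMeasureOnCompacts μ]
    [μ.IsAddRightInvariant] {F : E → ℝ} {L : NNReal} (hF : LipschitzWith L F) {e : E}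
    (he : ‖e‖ = 1) (hFe : ∀ y (t : ℝ), F (y + t • e) = F y + t) {A : Set E} {x : E} {ρ : ℝ}
    (hρ : 0 < ρ) (hA : A ⊆ ball x ρ) (hFA : ∀ q ∈ A, F q = 0) :
    HasLinearThickeningBound μ A := by
  refine ⟨ρ, hρ, ENNReal.ofReal ((L + 1) / ρ) * μ (ball x (2 * (2 * ρ))),
    mul_ne_top ofReal_ne_top measure_ball_lt_top.ne, fun t ht => ?_⟩
  have hslab : thickening t A ⊆ {y ∈ ball x (2 * ρ) | |F y| < (L + 1) * t} := by
    intro y hy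
    obtain ⟨q, hqA, hyq⟩ := mem_thickening_iff.mp hy
    refine ⟨?_, ?_⟩
    · calc dist y x ≤ dist y q + dist q x := dist_triangle _ _ _
        _ < 2 * ρ := by linarith [mem_ball.mp (hA hqA), ht.2]
    · calc |F y| = dist (F y) (F q) := by rw [hFA q hqA, Real.dist_0_eq_abs]
        _ ≤ L * dist y q := hF.dist_le_mul y q
        _ < (L + 1) * t := by nlinarith [L.coe_nonneg, ht.1, dist_nonneg (x := y) (y := q)]
  calc μ (thickening t A) ≤ μ {y ∈ ball x (2 * ρ) | |F y| < (L + 1) * t} := measure_mono hslab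
    _ ≤ ENNReal.ofReal (2 * ((L + 1) * t) / (2 * ρ)) * μ (ball x (2 * (2 * ρ))) :=
      measure_ball_inter_abs_lt_le μ hF.continuous he hFe x (by positivity)
        (by nlinarith [L.coe_nonneg, ht.1])
    _ = _ := by
      rw [mul_right_comm, ← ENNReal.ofReal_mul (by positivity)]
      congr 2
      field_simp

end Slab

section LipschitzBoundary

variable {n : ℕ} {Ω : Set (EuclideanSpace ℝ (Fin n))}

lemma HasLipschitzBoundary.exists_chart (hΩ : HasLipschitzBoundary Ω) {x : EuclideanSpace ℝ (Fin n)}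
    (hx : x ∈ frontier Ω) :
    ∃ (F : EuclideanSpace ℝ (Fin n) → ℝ) (L : NNReal) (e : EuclideanSpace ℝ (Fin n)) (r : ℝ),
      ‖e‖ = 1 ∧ 0 < r ∧ LipschitzWith L F ∧ (∀ y (t : ℝ), F (y + t • e) = F y + t) ∧
      ∀ y ∈ ball x r, (y ∈ Ω ↔ F y < 0) := by
  obtain ⟨e, K, f, r, he, hr, hf, hchart⟩ := hΩ x hx
  have hee : inner ℝ e e = (1 : ℝ) := by rw [real_inner_self_eq_norm_sq, he, one_pow]
  have hinner : LipschitzWith 1 fun y : EuclideanSpace ℝ (Fin n) => (inner ℝ y e : ℝ) :=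
    LipschitzWith.of_dist_le_mul fun y y' => by
      rw [Real.dist_eq, ← inner_sub_left, NNReal.coe_one, one_mul, dist_eq_norm]
      simpa [he] using abs_real_inner_le_norm (y - y') e
  have hproj : LipschitzWith 2 fun y : EuclideanSpace ℝ (Fin n) => y - (inner ℝ y e : ℝ) • e :=
    LipschitzWith.of_dist_le_mul fun y y' => by
      have hyy' := hinner.dist_le_mul y y'
      rw [Real.dist_eq, NNReal.coe_one, one_mul] at hyy'
      calc dist (y - (inner ℝ y e : ℝ) • e) (y' - (inner ℝ y' e : ℝ) • e)
          ≤ dist y y' + dist ((inner ℝ y e : ℝ) • e) ((inner ℝ y' e : ℝ) • e) :=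
            dist_sub_sub_le _ _ _ _
        _ ≤ 2 * dist y y' := by
          rw [dist_eq_norm (_ • e), ← sub_smul, norm_smul, he, mul_one, Real.norm_eq_abs]
          linarith
  refine ⟨fun y => inner ℝ y e - f (y - (inner ℝ y e : ℝ) • e), 1 + K * 2, e, r, he, hr,
    hinner.sub (hf.comp hproj), fun y t => ?_, fun y hy => by rw [sub_neg]; exact hchart y hy⟩
  simp only [inner_add_left, real_inner_smul_left, hee, mul_one, add_smul]
  rw [add_sub_add_right_eq_sub]
  ring

end LipschitzBoundary

lemma eq_zero_of_mem_frontier_inter {X : Type*} [TopologicalSpace X] {Ω U : Set X}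
    (hΩo : IsOpen Ω) (hU : IsOpen U) {F : X → ℝ} (hF : Continuous F)
    (hchart : ∀ y ∈ U, (y ∈ Ω ↔ F y < 0)) {q : X} (hq : q ∈ frontier Ω ∩ U) : F q = 0 := by
  rw [hΩo.frontier_eq] at hq
  obtain ⟨⟨hq_cl, hq_nmem⟩, hq_U⟩ := hq
  have hge : 0 ≤ F q := not_lt.mp fun h => hq_nmem ((hchart q hq_U).mpr h)
  have hq_cl' : q ∈ closure (Ω ∩ U) := by
    rw [inter_comm]; exact hU.inter_closure ⟨hq_U, hq_cl⟩
  have hsub : Ω ∩ U ⊆ {y | F y < 0} := fun y hy => (hchart y hy.2).mp hy.1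
  have hle : F q ≤ 0 := closure_lt_subset_le hF continuous_const (closure_mono hsub hq_cl')
  linarith

lemma lintegral_rpow_neg_lt_top_of_measure_lt_le {α : Type*} [MeasurableSpace α]
    {μ : Measure α} [IsFiniteMeasure μ] {g : α → ℝ} (hg : AEMeasurable g μ) (hg0 : ∀ x, 0 ≤ g x)
    {s : ℝ} (hs0 : 0 < s) (hs1 : s < 1) {r₀ : ℝ} {C : ℝ≥0∞} (hr₀ : 0 < r₀) (hC : C ≠ ⊤)
    (hbound : ∀ t ∈ Ioo 0 r₀, μ {x | g x < t} ≤ C * ENNReal.ofReal t) :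
    ∫⁻ x, ENNReal.ofReal (g x ^ (-s)) ∂μ < ⊤ := by
  set T := r₀ ^ (-s)
  have hT : 0 < T := Real.rpow_pos_of_pos hr₀ _
  have hs_ne : -s ≠ 0 := by linarith
  -- above height `T`, the superlevel set `{g ^ (-s) > t}` is the sublevel set `{g < t ^ (-1/s)}`
  have hlevel : ∀ t ∈ Ioi T, {x | t < g x ^ (-s)} ⊆ {x | g x < t ^ (-s)⁻¹} := by
    intro t ht x hx
    by_contra hge
    have ht0 : 0 < t ^ (-s)⁻¹ := Real.rpow_pos_of_pos (hT.trans ht) _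
    have := Real.rpow_le_rpow_of_nonpos ht0 (not_lt.mp hge) (by linarith : -s ≤ 0)
    rw [Real.rpow_inv_rpow (hT.trans ht).le hs_ne] at this
    exact (lt_irrefl _ (hx.trans_le this))
  have hlevel_lt : ∀ t ∈ Ioi T, t ^ (-s)⁻¹ ∈ Ioo 0 r₀ := fun t ht =>
    ⟨Real.rpow_pos_of_pos (hT.trans ht) _, by
      have := Real.rpow_lt_rpow_of_neg hT ht (inv_lt_zero.mpr (neg_lt_zero.mpr hs0))
      rwa [Real.rpow_rpow_inv hr₀.le hs_ne] at this⟩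
  have hexp : (-s)⁻¹ < -1 := by
    rw [inv_neg]; linarith [(one_lt_inv₀ hs0).mpr hs1]
  rw [lintegral_eq_lintegral_meas_lt μ (ae_of_all _ fun x => Real.rpow_nonneg (hg0 x) _)
    (hg.pow_const _), ← Ioc_union_Ioi_eq_Ioi hT.le]
  calc ∫⁻ t in Ioc 0 T ∪ Ioi T, μ {x | t < g x ^ (-s)}
      ≤ (∫⁻ _ in Ioc 0 T, μ univ) + ∫⁻ t in Ioi T, C * ENNReal.ofReal (t ^ (-s)⁻¹) :=
        (lintegral_union_le _ _ _).trans (add_le_add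
          (setLIntegral_mono' measurableSet_Ioc fun _ _ => measure_mono (subset_univ _))
          (setLIntegral_mono' measurableSet_Ioi fun t ht =>
            (measure_mono (hlevel t ht)).trans (hbound _ (hlevel_lt t ht))))
    _ < ⊤ := by
      rw [setLIntegral_const, lintegral_const_mul' _ _ hC, Real.volume_Ioc]
      exact add_lt_top.mpr ⟨mul_lt_top (measure_lt_top μ univ) ofReal_lt_top,
        mul_lt_top hC.lt_top (integrableOn_Ioi_rpow_of_lt hexp hT).lintegral_lt_top⟩

lemma exists_setLIntegral_inv_dist_rpow_le {E : Type*} [NormedAddCommGroup E] [NormedSpace ℝ E]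
    [FiniteDimensional ℝ E] [MeasurableSpace E] [BorelSpace E] (μ : Measure E)
    [μ.IsAddHaarMeasure] {r : ℝ} (hr : Module.finrank ℝ E < r) :
    ∃ C ≠ ∞, ∀ (x : E) {δ : ℝ}, 0 < δ → ∀ W : Set E, (∀ y ∈ W, δ ≤ dist x y) →
      ∫⁻ y in W, ENNReal.ofReal ((dist x y ^ r)⁻¹) ∂μ ≤
        C * ENNReal.ofReal (δ ^ ((Module.finrank ℝ E : ℝ) - r)) := by
  set d := Module.finrank ℝ E
  have hr0 : 0 < r := lt_of_le_of_lt (Nat.cast_nonneg d) hr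
  set g : E → ℝ≥0∞ := fun z => ENNReal.ofReal ((1 + ‖z‖) ^ (-r))
  have hg : Measurable g := by fun_prop
  refine ⟨ENNReal.ofReal (2 ^ r) * ∫⁻ z, g z ∂μ,
    mul_ne_top ofReal_ne_top (finite_integral_one_add_norm hr).ne, fun x δ hδ W hW => ?_⟩
  -- on `W`, the kernel is dominated by a rescaled translate of the integrable `(1 + ‖z‖) ^ (-r)`
  have hpoint : ∀ y ∈ W, ENNReal.ofReal ((dist x y ^ r)⁻¹) ≤
      ENNReal.ofReal ((δ / 2) ^ (-r)) * g (δ⁻¹ • (y - x)) := by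
    intro y hy
    have hdist : δ ≤ ‖y - x‖ := by rw [← dist_eq_norm, dist_comm]; exact hW y hy
    rw [← ENNReal.ofReal_mul (by positivity), norm_smul, Real.norm_of_nonneg (inv_pos.mpr hδ).le,
      ← Real.mul_rpow (by positivity) (by positivity), ← Real.rpow_neg (by positivity),
      dist_eq_norm, norm_sub_rev]
    refine ENNReal.ofReal_le_ofReal (Real.rpow_le_rpow_of_nonpos (by positivity) ?_ (by linarith))
    field_simp
    linarith
  have hscale : ∫⁻ y, g (δ⁻¹ • (y - x)) ∂μ = ENNReal.ofReal (δ ^ d) * ∫⁻ z, g z ∂μ := by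
    rw [lintegral_sub_right_eq_self (fun y => g (δ⁻¹ • y)) x,
      ← lintegral_map hg (measurable_const_smul _), Measure.map_addHaar_smul μ (by positivity),
      lintegral_smul_measure, inv_pow, inv_inv, abs_of_pos (by positivity), smul_eq_mul]
  calc ∫⁻ y in W, ENNReal.ofReal ((dist x y ^ r)⁻¹) ∂μ
      ≤ ∫⁻ y in W, ENNReal.ofReal ((δ / 2) ^ (-r)) * g (δ⁻¹ • (y - x)) ∂μ :=
        setLIntegral_mono (by fun_prop) hpoint
    _ ≤ ∫⁻ y, ENNReal.ofReal ((δ / 2) ^ (-r)) * g (δ⁻¹ • (y - x)) ∂μ :=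
        setLIntegral_le_lintegral _ _
    _ = ENNReal.ofReal ((δ / 2) ^ (-r)) * ENNReal.ofReal (δ ^ d) * ∫⁻ z, g z ∂μ := by
      rw [lintegral_const_mul _ (by fun_prop), hscale, mul_assoc]
    _ = _ := by
      rw [← ENNReal.ofReal_mul (by positivity), mul_right_comm,
        ← ENNReal.ofReal_mul (by positivity)]
      congr 2
      rw [Real.div_rpow hδ.le zero_le_two, Real.rpow_sub hδ, Real.rpow_neg hδ.le,
        Real.rpow_natCast]
      field_simp
      rw [← Real.rpow_add two_pos, neg_add_cancel, Real.rpow_zero]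

section Tail

variable {n : ℕ} {Ω : Set (EuclideanSpace ℝ (Fin n))}

lemma hasLinearThickeningBound_frontier (hΩo : IsOpen Ω) (hΩb : Bornology.IsBounded Ω)
    (hΩlip : HasLipschitzBoundary Ω) : HasLinearThickeningBound volume (frontier Ω) := by
  have hcompact : IsCompact (frontier Ω) := isCompact_of_isClosed_isBounded isClosed_frontier
    (hΩb.closure.subset frontier_subset_closure)
  refine hcompact.induction_on hasLinearThickeningBound_empty (fun _ _ hst ht => ht.mono hst)
    (fun _ _ hs ht => hs.union ht) fun x hx => ?_
  obtain ⟨F, L, e, r, he, hr, hF, hFe, hchart⟩ := hΩlip.exists_chart hx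
  exact ⟨frontier Ω ∩ ball x r, inter_mem_nhdsWithin _ (ball_mem_nhds x hr),
    hasLinearThickeningBound_of_eqOn_zero hF he hFe hr inter_subset_right
      fun q hq => eq_zero_of_mem_frontier_inter hΩo isOpen_ball hF.continuous hchart hq⟩

lemma setLIntegral_infDist_compl_rpow_neg_lt_top (hΩo : IsOpen Ω) (hΩb : Bornology.IsBounded Ω)
    (hΩlip : HasLipschitzBoundary Ω) (hΩc : Ωᶜ.Nonempty) {s : ℝ} (hs0 : 0 < s) (hs1 : s < 1) :
    ∫⁻ x in Ω, ENNReal.ofReal (infDist x Ωᶜ ^ (-s)) < ⊤ := by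
  have : IsFiniteMeasure (volume.restrict Ω) :=
    isFiniteMeasure_restrict.mpr hΩb.measure_lt_top.ne
  obtain ⟨r₀, hr₀, C, hC, hbound⟩ := hasLinearThickeningBound_frontier hΩo hΩb hΩlip
  refine lintegral_rpow_neg_lt_top_of_measure_lt_le (continuous_infDist_pt _).aemeasurable
    (fun _ => infDist_nonneg) hs0 hs1 hr₀ hC fun t ht => ?_
  rw [Measure.restrict_apply' hΩo.measurableSet]
  refine (measure_mono fun x hx => ?_).trans (hbound t ht)
  obtain ⟨y, hy, hxy⟩ := exists_mem_frontier_infDist_compl_eq_dist hx.2 (nonempty_compl.mp hΩc)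
  exact mem_thickening_iff.mpr ⟨y, hy, hxy ▸ hx.1⟩

lemma setLIntegral_prod_compl_dist_rpow_lt_top (hΩo : IsOpen Ω) (hΩb : Bornology.IsBounded Ω)
    (hΩlip : HasLipschitzBoundary Ω) {s : ℝ} (hs0 : 0 < s) (hs1 : s < 1) :
    ∫⁻ p in Ω ×ˢ Ωᶜ, ENNReal.ofReal ((dist p.1 p.2 ^ ((n : ℝ) + s))⁻¹) < ⊤ := by
  rcases Ωᶜ.eq_empty_or_nonempty with hΩc | hΩc
  · simp [hΩc]
  obtain ⟨C, hC, hkernel⟩ := exists_setLIntegral_inv_dist_rpow_le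
    (volume : Measure (EuclideanSpace ℝ (Fin n))) (r := n + s) (by simpa using hs0)
  rw [Measure.volume_eq_prod, ← Measure.prod_restrict, lintegral_prod _ (by fun_prop)]
  calc ∫⁻ x in Ω, ∫⁻ y in Ωᶜ, ENNReal.ofReal ((dist x y ^ ((n : ℝ) + s))⁻¹)
      ≤ ∫⁻ x in Ω, C * ENNReal.ofReal (infDist x Ωᶜ ^ (-s)) := by
        refine setLIntegral_mono' hΩo.measurableSet fun x hx => ?_
        have hδ := (hΩo.isClosed_compl.notMem_iff_infDist_pos hΩc).mp (not_not_intro hx)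
        simpa using hkernel x hδ Ωᶜ fun y hy => infDist_le_dist_of_mem hy
    _ = C * ∫⁻ x in Ω, ENNReal.ofReal (infDist x Ωᶜ ^ (-s)) := lintegral_const_mul' _ _ hC
    _ < ⊤ := mul_lt_top hC.lt_top
        (setLIntegral_infDist_compl_rpow_neg_lt_top hΩo hΩb hΩlip hΩc hs0 hs1)

end Tail

section Truncation

def truncate (N t : ℝ) : ℝ := max (-N) (min N t)

@[fun_prop]
lemma continuous_truncate (N : ℝ) : Continuous (truncate N) :=
  continuous_const.max (continuous_const.min continuous_id)

lemma abs_truncate_sub_truncate_le (N a b : ℝ) : |truncate N a - truncate N b| ≤ |a - b| := by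
  unfold truncate
  rw [max_comm (-N), max_comm (-N)]
  exact (abs_max_sub_max_le_abs _ _ _).trans (by simpa using abs_min_sub_min_le_max N a N b)

lemma truncate_mem_uIcc {N : ℝ} (hN : 0 ≤ N) (t : ℝ) : truncate N t ∈ uIcc 0 t := by
  unfold truncate
  rcases le_total 0 t with ht | ht
  · rw [uIcc_of_le ht, max_eq_right (by linarith [le_min hN ht])]
    exact ⟨le_min hN ht, min_le_right _ _⟩
  · rw [uIcc_of_ge ht, min_eq_right (ht.trans hN)]
    exact ⟨le_max_right _ _, max_le (by linarith) ht⟩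

lemma abs_truncate_le_abs {N : ℝ} (hN : 0 ≤ N) (t : ℝ) : |truncate N t| ≤ |t| := by
  simpa using abs_sub_le_of_uIcc_subset_uIcc
    (uIcc_subset_uIcc left_mem_uIcc (truncate_mem_uIcc hN t))

lemma abs_truncate_le {N : ℝ} (hN : 0 ≤ N) (t : ℝ) : |truncate N t| ≤ N :=
  abs_le.mpr ⟨le_max_left _ _, max_le (by linarith) (min_le_left _ _)⟩

lemma truncate_of_abs_le {N t : ℝ} (h : |t| ≤ N) : truncate N t = t := by
  rw [abs_le] at h
  rw [truncate, min_eq_right h.2, max_eq_right h.1]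

lemma truncate_zero {N : ℝ} (hN : 0 ≤ N) : truncate N 0 = 0 :=
  truncate_of_abs_le (by simpa using hN)

lemma eventually_truncate_eq (t : ℝ) : ∀ᶠ N : ℕ in atTop, truncate N t = t :=
  (eventually_ge_atTop ⌈|t|⌉₊).mono fun _ hN => truncate_of_abs_le (Nat.ceil_le.mp hN)

lemma abs_sub_le_max_of_mem_uIcc {a b m : ℝ} (hm : m ∈ uIcc a b) (c : ℝ) :
    |m - c| ≤ max |a - c| |b - c| := by
  rw [mem_uIcc] at hm
  rcases hm with ⟨h₁, h₂⟩ | ⟨h₁, h₂⟩ <;> refine abs_le.mpr ⟨?_, ?_⟩ <;>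
    linarith [neg_abs_le (a - c), le_abs_self (a - c), neg_abs_le (b - c), le_abs_self (b - c),
      le_max_left |a - c| |b - c|, le_max_right |a - c| |b - c|]

/- `a - truncate N (a - b)` lies between `a` and `b`, so its distance to `c` is at most the
larger of theirs. -/
lemma neg_abs_div_le_abs_sub_truncate {N κ : ℝ} (hN : 0 ≤ N) (hκ : 0 ≤ κ) (a b c : ℝ) :
    -|(|a - c| - |b - c|) / κ| ≤ (|a - c| - |a - truncate N (a - b) - c|) / κ := by
  have hm : a - truncate N (a - b) ∈ uIcc a b := by
    have := truncate_mem_uIcc hN (a - b)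
    rw [mem_uIcc] at this ⊢
    rcases this with h | h
    · exact Or.inr ⟨by linarith [h.2], by linarith [h.1]⟩
    · exact Or.inl ⟨by linarith [h.1], by linarith [h.2]⟩
  have hmax := abs_sub_le_max_of_mem_uIcc hm c
  calc -|(|a - c| - |b - c|) / κ| ≤ min 0 (|a - c| - |b - c|) / κ := by
        rw [← min_div_div_right hκ, zero_div]
        exact le_min (neg_nonpos.mpr (abs_nonneg _)) (neg_abs_le _)
    _ ≤ _ := by
      gcongr
      rcases le_total |a - c| |b - c| with h | h
      · rw [max_eq_right h] at hmax; linarith [min_le_right 0 (|a - c| - |b - c|)]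
      · rw [max_eq_left h] at hmax; linarith [min_le_left 0 (|a - c| - |b - c|)]

end Truncation

lemma abs_sub_abs_sub_le_mul {z a b : ℝ} (hz : |z| ≤ 1) (hza : z * a = |a|) :
    |a| - |a - b| ≤ z * b := by
  have : z * (a - b) ≤ |a - b| :=
    (le_abs_self _).trans (by rw [abs_mul]; exact mul_le_of_le_one_left (abs_nonneg _) hz)
  linarith [mul_sub z a b]

lemma integral_le_of_tendsto_of_neg_le {α : Type*} [MeasurableSpace α] {μ : Measure α}
    {F : ℕ → α → ℝ} {f G : α → ℝ} {c : ℝ} (hF : ∀ N, Integrable (F N) μ) (hf : Integrable f μ)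
    (hG : Integrable G μ) (hFG : ∀ N, ∀ᵐ x ∂μ, -G x ≤ F N x)
    (hlim : ∀ᵐ x ∂μ, Tendsto (fun N => F N x) atTop (nhds (f x)))
    (hc : ∀ N, ∫ x, F N x ∂μ ≤ c) : ∫ x, f x ∂μ ≤ c := by
  have hFG' : ∀ N, 0 ≤ᵐ[μ] fun x => F N x + G x := fun N =>
    (hFG N).mono fun x hx => by simp only [Pi.zero_apply]; linarith
  have hfG : 0 ≤ᵐ[μ] fun x => f x + G x := by
    filter_upwards [hlim, ae_all_iff.mpr hFG'] with x hx hxG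
    exact ge_of_tendsto (hx.add_const (G x)) (Eventually.of_forall hxG)
  have hlintegral : ∀ N, ∫⁻ x, ENNReal.ofReal (F N x + G x) ∂μ =
      ENNReal.ofReal (∫ x, F N x ∂μ + ∫ x, G x ∂μ) := fun N => by
    rw [← integral_add (hF N) hG]
    exact (ofReal_integral_eq_lintegral_ofReal ((hF N).add hG) (hFG' N)).symm
  -- Fatou's lemma for the nonnegative functions `F N + G`
  have hfatou : ENNReal.ofReal (∫ x, f x ∂μ + ∫ x, G x ∂μ) ≤ ENNReal.ofReal (c + ∫ x, G x ∂μ) :=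
    calc ENNReal.ofReal (∫ x, f x ∂μ + ∫ x, G x ∂μ)
        = ∫⁻ x, liminf (fun N => ENNReal.ofReal (F N x + G x)) atTop ∂μ := by
          rw [← integral_add hf hG]
          refine (ofReal_integral_eq_lintegral_ofReal (hf.add hG) hfG).trans
            (lintegral_congr_ae (hlim.mono fun x hx => ?_))
          exact (((ENNReal.continuous_ofReal.tendsto _).comp (hx.add_const (G x))).liminf_eq).symm
      _ ≤ liminf (fun N => ∫⁻ x, ENNReal.ofReal (F N x + G x) ∂μ) atTop :=
          lintegral_liminf_le' fun N => ((hF N).add hG).aemeasurable.ennreal_ofReal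
      _ ≤ ENNReal.ofReal (c + ∫ x, G x ∂μ) :=
          liminf_le_of_frequently_le' (Frequently.of_forall fun N => by
            rw [hlintegral]; exact ENNReal.ofReal_le_ofReal (by linarith [hc N]))
  have hcG : 0 ≤ c + ∫ x, G x ∂μ := by
    linarith [hc 0, integral_add (hF 0) hG ▸ integral_nonneg_of_ae (hFG' 0)]
  linarith [(ENNReal.ofReal_le_ofReal_iff hcG).mp hfatou]

lemma lintegral_ofReal_abs_truncate_comp_sub_lt_top {α : Type*} [MeasurableSpace α]
    {μ : Measure α} {u v : α → ℝ} (hu : Measurable u) (hu1 : ∫⁻ x, ENNReal.ofReal |u x| ∂μ < ⊤)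
    (hv1 : ∫⁻ x, ENNReal.ofReal |v x| ∂μ < ⊤) {N : ℝ} (hN : 0 ≤ N) :
    ∫⁻ x, ENNReal.ofReal |(truncate N ∘ (u - v)) x| ∂μ < ⊤ :=
  calc ∫⁻ x, ENNReal.ofReal |(truncate N ∘ (u - v)) x| ∂μ
      ≤ ∫⁻ x, ENNReal.ofReal |u x| + ENNReal.ofReal |v x| ∂μ := lintegral_mono fun x =>
        (ENNReal.ofReal_le_ofReal ((abs_truncate_le_abs hN _).trans (abs_sub _ _))).trans
          ofReal_add_le
    _ = ∫⁻ x, ENNReal.ofReal |u x| ∂μ + ∫⁻ x, ENNReal.ofReal |v x| ∂μ :=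
        lintegral_add_left (by fun_prop) _
    _ < ⊤ := add_lt_top.mpr ⟨hu1, hv1⟩

lemma integrableOn_prod_comm_of_symm {α : Type*} [MeasureSpace α] [SFinite (volume : Measure α)]
    {φ : α × α → ℝ} (hφ : ∀ p, φ p.swap = φ p) {A B : Set α} (h : IntegrableOn φ (A ×ˢ B)) :
    IntegrableOn φ (B ×ˢ A) := by
  rw [IntegrableOn, Measure.volume_eq_prod, ← Measure.prod_restrict] at h ⊢
  exact h.swap.congr (ae_of_all _ hφ)

lemma ae_imp_of_ae_restrict_compl_prod {α : Type*} [MeasureSpace α] [SFinite (volume : Measure α)]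
    {A : Set α} (hA : MeasurableSet A) {P : α → Prop} (h : ∀ᵐ y ∂volume.restrict Aᶜ, P y) :
    ∀ᵐ p : α × α, (p.1 ∉ A → P p.1) ∧ (p.2 ∉ A → P p.2) := by
  rw [ae_restrict_iff' hA.compl] at h
  rw [Measure.volume_eq_prod]
  exact (Measure.quasiMeasurePreserving_fst.ae h).and (Measure.quasiMeasurePreserving_snd.ae h)

section FractionalOneLaplacian

variable {n : ℕ} {Ω : Set (EuclideanSpace ℝ (Fin n))} {s : ℝ}

noncomputable def diffQuot (s : ℝ) (u : EuclideanSpace ℝ (Fin n) → ℝ)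
    (p : EuclideanSpace ℝ (Fin n) × EuclideanSpace ℝ (Fin n)) : ℝ :=
  |u p.1 - u p.2| / dist p.1 p.2 ^ ((n : ℝ) + s)

noncomputable def energyDensityDiff (s : ℝ) (u v : EuclideanSpace ℝ (Fin n) → ℝ)
    (p : EuclideanSpace ℝ (Fin n) × EuclideanSpace ℝ (Fin n)) : ℝ :=
  (|u p.1 - u p.2| - |v p.1 - v p.2|) / dist p.1 p.2 ^ ((n : ℝ) + s)

@[fun_prop]
lemma measurable_diffQuot {u : EuclideanSpace ℝ (Fin n) → ℝ} (hu : Measurable u) :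
    Measurable (diffQuot s u) := by
  unfold diffQuot; fun_prop

@[fun_prop]
lemma measurable_energyDensityDiff {u v : EuclideanSpace ℝ (Fin n) → ℝ} (hu : Measurable u)
    (hv : Measurable v) : Measurable (energyDensityDiff s u v) := by
  unfold energyDensityDiff; fun_prop

lemma QΩ_subset_union (Ω : Set (EuclideanSpace ℝ (Fin n))) :
    QΩ Ω ⊆ Ω ×ˢ Ω ∪ (Ω ×ˢ Ωᶜ ∪ Ωᶜ ×ˢ Ω) := by
  intro p hp
  by_cases h₁ : p.1 ∈ Ω <;> by_cases h₂ : p.2 ∈ Ω <;> simp_all [QΩ]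

lemma integrableOn_diffQuot_iff {u : EuclideanSpace ℝ (Fin n) → ℝ} (hu : Measurable u) :
    IntegrableOn (diffQuot s u) (Ω ×ˢ Ω) ↔ gagliardoIntegral Ω s 1 u < ⊤ := by
  rw [IntegrableOn, Integrable, and_iff_right (measurable_diffQuot hu).aestronglyMeasurable,
    hasFiniteIntegral_iff_ofReal (ae_of_all _ fun p => by unfold diffQuot; positivity),
    Measure.volume_eq_prod, ← Measure.prod_restrict, lintegral_prod _ (by fun_prop),
    gagliardoIntegral]
  simp only [diffQuot, Real.rpow_one, mul_one]

lemma integrableOn_kernel_prod_compl (hΩo : IsOpen Ω) (hΩb : Bornology.IsBounded Ω)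
    (hΩlip : HasLipschitzBoundary Ω) (hs0 : 0 < s) (hs1 : s < 1) :
    IntegrableOn (fun p => (dist p.1 p.2 ^ ((n : ℝ) + s))⁻¹) (Ω ×ˢ Ωᶜ) :=
  ⟨Measurable.aestronglyMeasurable (by fun_prop),
    (hasFiniteIntegral_iff_ofReal (ae_of_all _ fun p => by positivity)).mpr
      (setLIntegral_prod_compl_dist_rpow_lt_top hΩo hΩb hΩlip hs0 hs1)⟩

/- Off `Ω × Ω`, the difference quotient of a function bounded by `N` is at most `2N` times the
kernel. -/
lemma integrableOn_QΩ_diffQuot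
    (hK : IntegrableOn (fun p => (dist p.1 p.2 ^ ((n : ℝ) + s))⁻¹) (Ω ×ˢ Ωᶜ))
    {w : EuclideanSpace ℝ (Fin n) → ℝ} (hw : Measurable w) {N : ℝ} (hwN : ∀ x, |w x| ≤ N)
    (hwΩ : IntegrableOn (diffQuot s w) (Ω ×ˢ Ω)) : IntegrableOn (diffQuot s w) (QΩ Ω) := by
  have hoff : IntegrableOn (diffQuot s w) (Ω ×ˢ Ωᶜ) := by
    refine (hK.const_mul (2 * N)).mono' (measurable_diffQuot hw).aestronglyMeasurable
      (ae_of_all _ fun p => ?_)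
    rw [diffQuot, Real.norm_of_nonneg (by positivity), div_eq_mul_inv]
    gcongr
    linarith [abs_sub (w p.1) (w p.2), hwN p.1, hwN p.2]
  have hsymm : ∀ p, diffQuot s w p.swap = diffQuot s w p := fun p => by
    simp only [diffQuot, Prod.fst_swap, Prod.snd_swap, abs_sub_comm (w p.2), dist_comm p.2]
  exact (hwΩ.union (hoff.union (integrableOn_prod_comm_of_symm hsymm hoff))).mono_set
    (QΩ_subset_union Ω)

lemma abs_energyDensityDiff_sub_le (u w : EuclideanSpace ℝ (Fin n) → ℝ)
    (p : EuclideanSpace ℝ (Fin n) × EuclideanSpace ℝ (Fin n)) :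
    |energyDensityDiff s u (u - w) p| ≤ diffQuot s w p := by
  rw [energyDensityDiff, diffQuot, abs_div, abs_of_nonneg (Real.rpow_nonneg dist_nonneg _)]
  refine div_le_div_of_nonneg_right ?_ (Real.rpow_nonneg dist_nonneg _)
  simpa [sub_sub_sub_comm] using abs_abs_sub_abs_le_abs_sub (u p.1 - u p.2)
    ((u p.1 - u p.2) - (w p.1 - w p.2))

lemma integrableOn_energyDensityDiff_sub {u w : EuclideanSpace ℝ (Fin n) → ℝ} (hu : Measurable u)
    (hw : Measurable w) {A : Set (EuclideanSpace ℝ (Fin n) × EuclideanSpace ℝ (Fin n))}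
    (hwA : IntegrableOn (diffQuot s w) A) : IntegrableOn (energyDensityDiff s u (u - w)) A :=
  hwA.mono' (measurable_energyDensityDiff hu (hu.sub hw)).aestronglyMeasurable
    (ae_of_all _ (abs_energyDensityDiff_sub_le u w))

lemma setIntegral_energyDensityDiff_sub_nonpos {u w : EuclideanSpace ℝ (Fin n) → ℝ}
    {z : EuclideanSpace ℝ (Fin n) × EuclideanSpace ℝ (Fin n) → ℝ} (hu : Measurable u)
    (hzm : Measurable z) (hz1 : ∀ p, |z p| ≤ 1)
    (hzu : ∀ᵐ p ∂(volume.restrict (QΩ Ω)), z p * (u p.1 - u p.2) = |u p.1 - u p.2|)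
    (hw : Measurable w) (hwQ : IntegrableOn (diffQuot s w) (QΩ Ω))
    (hzw : ∫ p in QΩ Ω, z p * (w p.1 - w p.2) / dist p.1 p.2 ^ ((n : ℝ) + s) = 0) :
    ∫ p in QΩ Ω, energyDensityDiff s u (u - w) p ≤ 0 := by
  have hzwQ : IntegrableOn (fun p => z p * (w p.1 - w p.2) / dist p.1 p.2 ^ ((n : ℝ) + s))
      (QΩ Ω) := by
    refine hwQ.mono' (Measurable.aestronglyMeasurable (by fun_prop)) (ae_of_all _ fun p => ?_)
    rw [diffQuot, Real.norm_eq_abs, abs_div, abs_of_nonneg (Real.rpow_nonneg dist_nonneg _),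
      abs_mul]
    gcongr
    exact mul_le_of_le_one_left (abs_nonneg _) (hz1 p)
  refine (integral_mono_ae (integrableOn_energyDensityDiff_sub hu hw hwQ) hzwQ
    (hzu.mono fun p hp => ?_)).trans hzw.le
  rw [energyDensityDiff, Pi.sub_apply, Pi.sub_apply, sub_sub_sub_comm]
  exact div_le_div_of_nonneg_right (abs_sub_abs_sub_le_mul (hz1 p) hp)
    (Real.rpow_nonneg dist_nonneg _)

lemma diffQuot_truncate_comp_sub_le (N : ℝ) (u v : EuclideanSpace ℝ (Fin n) → ℝ)
    (p : EuclideanSpace ℝ (Fin n) × EuclideanSpace ℝ (Fin n)) :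
    diffQuot s (truncate N ∘ (u - v)) p ≤ diffQuot s u p + diffQuot s v p := by
  rw [diffQuot, diffQuot, diffQuot, ← add_div]
  refine div_le_div_of_nonneg_right ?_ (Real.rpow_nonneg dist_nonneg _)
  simp only [Function.comp_apply, Pi.sub_apply]
  exact (abs_truncate_sub_truncate_le N _ _).trans
    (by simpa [sub_sub_sub_comm] using abs_sub (u p.1 - u p.2) (v p.1 - v p.2))

lemma integrableOn_diffQuot_truncate_comp_sub {u v : EuclideanSpace ℝ (Fin n) → ℝ}
    (hu : Measurable u) (hv : Measurable v)
    {A : Set (EuclideanSpace ℝ (Fin n) × EuclideanSpace ℝ (Fin n))}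
    (huvA : IntegrableOn (diffQuot s u + diffQuot s v) A) (N : ℝ) :
    IntegrableOn (diffQuot s (truncate N ∘ (u - v))) A :=
  huvA.mono' (measurable_diffQuot (by fun_prop)).aestronglyMeasurable (ae_of_all _ fun p => by
    rw [Real.norm_of_nonneg (by unfold diffQuot; positivity)]
    exact diffQuot_truncate_comp_sub_le N u v p)

lemma neg_le_energyDensityDiff_truncate {u v : EuclideanSpace ℝ (Fin n) → ℝ} {N : ℝ}
    (hN : 0 ≤ N) {p : EuclideanSpace ℝ (Fin n) × EuclideanSpace ℝ (Fin n)}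
    (hp₁ : p.1 ∉ Ω → v p.1 = u p.1) (hp₂ : p.2 ∉ Ω → v p.2 = u p.2) :
    -((Ω ×ˢ Ω).indicator (diffQuot s u + diffQuot s v) p + |energyDensityDiff s u v p|) ≤
      energyDensityDiff s u (u - truncate N ∘ (u - v)) p := by
  have hκ : 0 ≤ dist p.1 p.2 ^ ((n : ℝ) + s) := Real.rpow_nonneg dist_nonneg _
  by_cases hp : p ∈ Ω ×ˢ Ω
  · rw [indicator_of_mem hp, Pi.add_apply]
    linarith [neg_abs_le (energyDensityDiff s u (u - truncate N ∘ (u - v)) p),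
      abs_nonneg (energyDensityDiff s u v p), abs_energyDensityDiff_sub_le (s := s) u
      (truncate N ∘ (u - v)) p, diffQuot_truncate_comp_sub_le (s := s) N u v p]
  · rw [indicator_of_notMem hp, zero_add]
    simp only [energyDensityDiff, Pi.sub_apply, Function.comp_apply]
    rcases not_and_or.mp hp with h₁ | h₂
    · rw [hp₁ h₁, sub_self, truncate_zero hN, sub_zero, abs_sub_comm (u p.1),
        abs_sub_comm (u p.1), abs_sub_comm (u p.1)]
      exact neg_abs_div_le_abs_sub_truncate hN hκ _ _ _
    · rw [hp₂ h₂, sub_self, truncate_zero hN, sub_zero]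
      exact neg_abs_div_le_abs_sub_truncate hN hκ _ _ _

lemma tendsto_energyDensityDiff_truncate (u v : EuclideanSpace ℝ (Fin n) → ℝ)
    (p : EuclideanSpace ℝ (Fin n) × EuclideanSpace ℝ (Fin n)) :
    Tendsto (fun N : ℕ => energyDensityDiff s u (u - truncate N ∘ (u - v)) p) atTop
      (nhds (energyDensityDiff s u v p)) := by
  have h : ∀ x, Tendsto (fun N : ℕ => u x - truncate N (u x - v x)) atTop (nhds (v x)) :=
    fun x => tendsto_const_nhds.congr'
      ((eventually_truncate_eq (u x - v x)).mono fun N hN => by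
        change v x = u x - truncate N (u x - v x)
        rw [hN]; ring)
  simp only [energyDensityDiff, Pi.sub_apply, Function.comp_apply]
  exact (tendsto_const_nhds.sub ((h p.1).sub (h p.2)).abs).div_const _

end FractionalOneLaplacian

theorem stmt12_general {n : ℕ} (Ω : Set (EuclideanSpace ℝ (Fin n)))
    (hΩo : IsOpen Ω) (hΩb : Bornology.IsBounded Ω) (hΩlip : HasLipschitzBoundary Ω)
    (s : ℝ) (hs : s ∈ Set.Ioo (0 : ℝ) 1)
    (u : EuclideanSpace ℝ (Fin n) → ℝ) (hu : Measurable u)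
    (huL1 : (∫⁻ x in Ω, ENNReal.ofReal |u x|) < ⊤) (huG : gagliardoIntegral Ω s 1 u < ⊤)
    -- the vector field `z` witnessing that `u` is a weak solution of `(-Δ)₁^s u = 0` in `Ω`
    (z : EuclideanSpace ℝ (Fin n) × EuclideanSpace ℝ (Fin n) → ℝ) (hzm : Measurable z)
    (hz1 : ∀ pr, |z pr| ≤ 1)
    (hzu : ∀ᵐ pr ∂(volume.restrict (QΩ Ω)), z pr * (u pr.1 - u pr.2) = |u pr.1 - u pr.2|)
    (hzeq : ∀ w : EuclideanSpace ℝ (Fin n) → ℝ, Measurable w →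
      (∫⁻ x in Ω, ENNReal.ofReal |w x|) < ⊤ → gagliardoIntegral Ω s 1 w < ⊤ →
      (∀ᵐ y ∂(volume.restrict Ωᶜ), w y = 0) →
      (∫ pr in QΩ Ω, z pr * (w pr.1 - w pr.2) / dist pr.1 pr.2 ^ ((n : ℝ) + s)) = 0) :
    -- then `u` is an s-minimal function in `Ω`
    ∀ v : EuclideanSpace ℝ (Fin n) → ℝ, Measurable v →
      (∫⁻ x in Ω, ENNReal.ofReal |v x|) < ⊤ → gagliardoIntegral Ω s 1 v < ⊤ →
      (∀ᵐ y ∂(volume.restrict Ωᶜ), v y = u y) →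
      (∫ pr in QΩ Ω,
        (|u pr.1 - u pr.2| - |v pr.1 - v pr.2|) / dist pr.1 pr.2 ^ ((n : ℝ) + s)) ≤ 0 := by
  intro v hv hvL1 hvG hvu
  change ∫ p in QΩ Ω, energyDensityDiff s u v p ≤ 0
  by_cases hf : IntegrableOn (energyDensityDiff s u v) (QΩ Ω)
  swap
  · -- the Bochner integral of a non-integrable function is `0`
    exact (integral_undef hf).le
  have huvΩ : IntegrableOn (diffQuot s u + diffQuot s v) (Ω ×ˢ Ω) :=
    ((integrableOn_diffQuot_iff hu).mpr huG).add ((integrableOn_diffQuot_iff hv).mpr hvG)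
  have hw : ∀ N : ℕ, Measurable (truncate N ∘ (u - v)) := fun N => by fun_prop
  have hwΩ := integrableOn_diffQuot_truncate_comp_sub hu hv huvΩ
  have hwQ : ∀ N : ℕ, IntegrableOn (diffQuot s (truncate N ∘ (u - v))) (QΩ Ω) := fun N =>
    integrableOn_QΩ_diffQuot (integrableOn_kernel_prod_compl hΩo hΩb hΩlip hs.1 hs.2) (hw N)
      (fun _ => abs_truncate_le N.cast_nonneg _) (hwΩ N)
  have hout := ae_restrict_of_ae (μ := volume) (s := QΩ Ω)
    (ae_imp_of_ae_restrict_compl_prod hΩo.measurableSet hvu)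
  refine integral_le_of_tendsto_of_neg_le
    (fun N => integrableOn_energyDensityDiff_sub hu (hw N) (hwQ N)) hf
    (((huvΩ.integrable_indicator (hΩo.measurableSet.prod hΩo.measurableSet)).integrableOn).add
      hf.abs)
    (fun N => hout.mono fun p hp => neg_le_energyDensityDiff_truncate N.cast_nonneg hp.1 hp.2)
    (ae_of_all _ (tendsto_energyDensityDiff_truncate u v)) fun N =>
    setIntegral_energyDensityDiff_sub_nonpos hu hzm hz1 hzu (hw N) (hwQ N)
      (hzeq _ (hw N) (lintegral_ofReal_abs_truncate_comp_sub_lt_top hu huL1 hvL1 N.cast_nonneg)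
        ((integrableOn_diffQuot_iff (hw N)).mp (hwΩ N))
        (hvu.mono fun y hy => by simp [hy, truncate_zero]))

theorem stmt12 {n : ℕ} (Ω : Set (EuclideanSpace ℝ (Fin n)))
    (hΩo : IsOpen Ω) (hΩb : Bornology.IsBounded Ω) (hΩlip : HasLipschitzBoundary Ω)
    (s : ℝ) (hs : s ∈ Set.Ioo (0 : ℝ) 1)
    (u : EuclideanSpace ℝ (Fin n) → ℝ) (hu : Measurable u)
    (huL1 : (∫⁻ x in Ω, ENNReal.ofReal |u x|) < ⊤) (huG : gagliardoIntegral Ω s 1 u < ⊤)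
    -- the vector field `z` witnessing that `u` is a weak solution of `(-Δ)₁^s u = 0` in `Ω`
    (z : EuclideanSpace ℝ (Fin n) × EuclideanSpace ℝ (Fin n) → ℝ) (hzm : Measurable z)
    (hz1 : ∀ pr, |z pr| ≤ 1) (hzanti : ∀ x y, z (x, y) = - z (y, x))
    (hzu : ∀ᵐ pr ∂(volume.restrict (QΩ Ω)), z pr * (u pr.1 - u pr.2) = |u pr.1 - u pr.2|)
    (hzeq : ∀ w : EuclideanSpace ℝ (Fin n) → ℝ, Measurable w →
      (∫⁻ x in Ω, ENNReal.ofReal |w x|) < ⊤ → gagliardoIntegral Ω s 1 w < ⊤ →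
      (∀ᵐ y ∂(volume.restrict Ωᶜ), w y = 0) →
      (∫ pr in QΩ Ω, z pr * (w pr.1 - w pr.2) / dist pr.1 pr.2 ^ ((n : ℝ) + s)) = 0) :
    -- then `u` is an s-minimal function in `Ω`
    ∀ v : EuclideanSpace ℝ (Fin n) → ℝ, Measurable v →
      (∫⁻ x in Ω, ENNReal.ofReal |v x|) < ⊤ → gagliardoIntegral Ω s 1 v < ⊤ →
      (∀ᵐ y ∂(volume.restrict Ωᶜ), v y = u y) →
      (∫ pr in QΩ Ω,
        (|u pr.1 - u pr.2| - |v pr.1 - v pr.2|) / dist pr.1 pr.2 ^ ((n : ℝ) + s)) ≤ 0 :=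
  stmt12_general Ω hΩo hΩb hΩlip s hs u hu huL1 huG z hzm hz1 hzu hzeq
end
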